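/- arXiv:2010.15107 — 7 statements merged into one kernel-verified Lean document; each statement's English description precedes it below -/
import Mathlib

section
/- For every integer partition λ, the sum of φ_P(δ) over all subpartitions δ of λ equals N(λ), the product of the parts of λ (with N(∅) = 1). Here φ_P(λ) := N(λ) · ∏_{k ∈ λ, distinct parts} (1 - 1/k), and φ_P(∅) = 1. -/
/-- The norm `N(λ)`: product of the parts of the partition, `N(∅) = 1`. -/
def Npart (l : Multiset ℕ) : ℚ := (l.map (fun k => (k : ℚ))).prod

/-- The partition phi function `φ_P(λ) = N(λ) ∏_{k ∈ λ distinct} (1 - 1/k)`,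
with `φ_P(∅) = 1`. -/
def phiP (l : Multiset ℕ) : ℚ :=
  Npart l * ∏ k ∈ l.toFinset, (1 - (k : ℚ)⁻¹)

lemma Npart_add (s t : Multiset ℕ) : Npart (s + t) = Npart s * Npart t := by
  simp [Npart]

lemma Npart_replicate (m k : ℕ) : Npart (Multiset.replicate m k) = (k : ℚ) ^ m := by
  simp [Npart, Multiset.map_replicate, Multiset.prod_replicate]

lemma phiP_replicate_add (k m : ℕ) (δ : Multiset ℕ) (hkδ : k ∉ δ) :
    phiP (Multiset.replicate m k + δ) =
      (if m = 0 then 1 else (k : ℚ) ^ m * (1 - (k : ℚ)⁻¹)) * phiP δ := by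
  rcases Nat.eq_zero_or_pos m with hm | hm
  · simp [hm]
  · have hm0 : m ≠ 0 := hm.ne'
    have htf : (Multiset.replicate m k + δ).toFinset = insert k δ.toFinset := by
      ext x
      simp [Multiset.mem_toFinset, Multiset.mem_replicate, hm0, or_comm]
    have hknot : k ∉ δ.toFinset := by simpa [Multiset.mem_toFinset] using hkδ
    simp only [phiP, Npart_add, Npart_replicate, htf, Finset.prod_insert hknot, if_neg hm0]
    ring

lemma geom_tel (k a : ℕ) (hk : k ≠ 0) :
    ∑ m ∈ Finset.range (a + 1),
      (if m = 0 then (1 : ℚ) else (k : ℚ) ^ m * (1 - (k : ℚ)⁻¹)) = (k : ℚ) ^ a := by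
  have hk' : (k : ℚ) ≠ 0 := Nat.cast_ne_zero.mpr hk
  induction a with
  | zero => simp
  | succ a ih =>
      rw [Finset.sum_range_succ, ih, if_neg (Nat.succ_ne_zero a)]
      field_simp
      ring

lemma sum_phiP_aux (s : Multiset ℕ) (hs : ∀ x ∈ s, x ≠ 0) :
    ∑ d ∈ s.powerset.toFinset, phiP d = Npart s := by
  induction s using Multiset.strongInductionOn with
  | _ s ih =>
    rcases Multiset.empty_or_exists_mem s with rfl | ⟨k, hk⟩
    · simp [phiP, Npart]
    · have hk0 : k ≠ 0 := hs k hk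
      set a := s.count k with ha
      set t := s.filter (· ≠ k) with htdef
      have hkt : k ∉ t := by simp [htdef]
      have hsplit : Multiset.replicate a k + t = s := by
        have h1 : s.filter (· = k) = Multiset.replicate a k := by
          simpa [eq_comm] using Multiset.filter_eq s k
        calc Multiset.replicate a k + t = s.filter (· = k) + s.filter (fun x => ¬ x = k) := by
              rw [h1]
          _ = s := Multiset.filter_add_not _ s
      have hts : t ≤ s := Multiset.filter_le _ s
      have htne : t ≠ s := by
        intro h
        have : k ∈ t := h ▸ hk
        exact hkt this
      have htlt : t < s := lt_of_le_of_ne hts htne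
      have iht : ∑ d ∈ t.powerset.toFinset, phiP d = Npart t :=
        ih t htlt (fun x hx => hs x (Multiset.mem_of_le hts hx))
      have hcountt : t.count k = 0 := Multiset.count_eq_zero.mpr hkt
      -- bijection between subpartitions of s and (m, δ) with m ≤ a, δ ≤ t
      have hbij : ∑ d ∈ s.powerset.toFinset, phiP d =
          ∑ x ∈ (Finset.range (a + 1)) ×ˢ t.powerset.toFinset,
            (if x.1 = 0 then (1 : ℚ) else (k : ℚ) ^ x.1 * (1 - (k : ℚ)⁻¹)) * phiP x.2 := by
        refine Finset.sum_bij' (i := fun d _ => (d.count k, d.filter (· ≠ k)))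
          (j := fun x _ => Multiset.replicate x.1 k + x.2) ?_ ?_ ?_ ?_ ?_
        · intro d hd
          have hd' : d ≤ s := by
            simpa [Multiset.mem_toFinset, Multiset.mem_powerset] using hd
          rw [Finset.mem_product]
          constructor
          · simp only [Finset.mem_range]
            exact Nat.lt_succ_of_le (ha ▸ Multiset.count_le_of_le k hd')
          · simp only [Multiset.mem_toFinset, Multiset.mem_powerset]
            calc d.filter (· ≠ k) ≤ s.filter (· ≠ k) := Multiset.filter_le_filter _ hd'
              _ = t := rfl
        · intro x hx
          simp only [Finset.mem_product, Finset.mem_range, Multiset.mem_toFinset,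
            Multiset.mem_powerset] at hx
          simp only [Multiset.mem_toFinset, Multiset.mem_powerset]
          calc Multiset.replicate x.1 k + x.2 ≤ Multiset.replicate a k + t :=
                add_le_add ((Multiset.replicate_le_replicate k).mpr
                  (Nat.lt_succ_iff.mp hx.1)) hx.2
            _ = s := hsplit
        · intro d hd
          have hd' : d ≤ s := by
            simpa [Multiset.mem_toFinset, Multiset.mem_powerset] using hd
          have h1 : d.filter (· = k) = Multiset.replicate (d.count k) k := by
            simpa [eq_comm] using Multiset.filter_eq d k
          calc Multiset.replicate (d.count k) k + d.filter (· ≠ k)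
              = d.filter (· = k) + d.filter (fun x => ¬ x = k) := by rw [h1]
            _ = d := Multiset.filter_add_not _ d
        · intro x hx
          simp only [Finset.mem_product, Finset.mem_range, Multiset.mem_toFinset,
            Multiset.mem_powerset] at hx
          have hkx2 : k ∉ x.2 := fun h => hkt (Multiset.mem_of_le hx.2 h)
          have hc : (Multiset.replicate x.1 k + x.2).count k = x.1 := by
            simp [Multiset.count_replicate, Multiset.count_eq_zero.mpr hkx2]
          have hf : (Multiset.replicate x.1 k + x.2).filter (· ≠ k) = x.2 := by
            rw [Multiset.filter_add]
            have h1 : (Multiset.replicate x.1 k).filter (· ≠ k) = 0 := by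
              simp [Multiset.filter_eq_nil]
              intro y hy
              simp [Multiset.eq_of_mem_replicate hy]
            have h2 : x.2.filter (· ≠ k) = x.2 :=
              Multiset.filter_eq_self.mpr (fun y hy h => hkx2 (h ▸ hy))
            rw [h1, h2, zero_add]
          exact Prod.ext hc hf
        · intro d hd
          have hd' : d ≤ s := by
            simpa [Multiset.mem_toFinset, Multiset.mem_powerset] using hd
          have h1 : d.filter (· = k) = Multiset.replicate (d.count k) k := by
            simpa [eq_comm] using Multiset.filter_eq d k
          have hdec : Multiset.replicate (d.count k) k + d.filter (· ≠ k) = d := by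
            calc Multiset.replicate (d.count k) k + d.filter (· ≠ k)
                = d.filter (· = k) + d.filter (fun x => ¬ x = k) := by rw [h1]
              _ = d := Multiset.filter_add_not _ d
          have hknotin : k ∉ d.filter (· ≠ k) := by simp
          rw [← phiP_replicate_add k (d.count k) (d.filter (· ≠ k)) hknotin, hdec]
      rw [hbij, Finset.sum_product]
      simp only [← Finset.sum_mul]
      rw [Finset.sum_comm]
      have : ∑ y ∈ t.powerset.toFinset, ∑ x ∈ Finset.range (a + 1),
          (if x = 0 then (1 : ℚ) else (k : ℚ) ^ x * (1 - (k : ℚ)⁻¹)) * phiP y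
          = ∑ y ∈ t.powerset.toFinset, (k : ℚ) ^ a * phiP y := by
        refine Finset.sum_congr rfl (fun y _ => ?_)
        rw [← Finset.sum_mul, geom_tel k a hk0]
      rw [this, ← Finset.mul_sum, iht, ← Npart_replicate a k, ← Npart_add, hsplit]

/-- For every partition `λ`, `∑_{δ|λ} φ_P(δ) = N(λ)`, the sum over all
subpartitions (submultisets) `δ` of `λ`. -/
theorem sum_phiP_over_subpartitions (n : ℕ) (p : Nat.Partition n) :
    ∑ d ∈ p.parts.powerset.toFinset, phiP d = Npart p.parts := by
  exact sum_phiP_aux p.parts (fun x hx => (p.parts_pos hx).ne')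
end

section
/- For k ≥ 2, the limit as q → 1⁻ (q real, 0 ≤ q < 1) of (1-q) · ∑_{n k-free, n ≥ 1} q^n equals 1/ζ(k), where the sum is over positive integers n not divisible by any k-th power of a prime, and ζ is the Riemann zeta function. -/
open Finset ArithmeticFunction Filter Topology
open scoped Classical
open scoped ArithmeticFunction.Moebius

lemma moebius_sum_kfree (k : ℕ) (hk : 1 ≤ k) (n : ℕ) (hn : 0 < n) :
    ∑ d ∈ n.divisors.filter (fun d => d ^ k ∣ n), (μ d : ℂ)
      = if ∀ p : ℕ, p.Prime → ¬ (p ^ k ∣ n) then 1 else 0 := by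
  classical
  set P : Finset ℕ := n.primeFactors.filter (fun p => p ^ k ∣ n) with hP
  set r : ℕ := ∏ p ∈ P, p with hr
  have hn0 : n ≠ 0 := hn.ne'
  have hPprime : ∀ p ∈ P, p.Prime := fun p hp =>
    Nat.prime_of_mem_primeFactors (Finset.mem_filter.mp hp).1
  have hr0 : r ≠ 0 :=
    Finset.prod_ne_zero_iff.mpr fun p hp => (hPprime p hp).ne_zero
  -- for squarefree d, membership equivalence
  have hmem : ∀ d : ℕ, Squarefree d →
      (d ∈ n.divisors.filter (fun d => d ^ k ∣ n) ↔ d ∈ r.divisors) := by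
    intro d hd
    simp only [Finset.mem_filter, Nat.mem_divisors]
    constructor
    · rintro ⟨⟨hdn, _⟩, hdk⟩
      have hsub : d.primeFactors ⊆ P := by
        intro p hp
        have hp' := Nat.prime_of_mem_primeFactors hp
        have hpd : p ∣ d := Nat.dvd_of_mem_primeFactors hp
        refine Finset.mem_filter.mpr ⟨Nat.mem_primeFactors.mpr ⟨hp', hpd.trans hdn, hn0⟩, ?_⟩
        exact (pow_dvd_pow_of_dvd hpd k).trans hdk
      refine ⟨?_, hr0⟩
      calc d = ∏ p ∈ d.primeFactors, p := (Nat.prod_primeFactors_of_squarefree hd).symm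
        _ ∣ ∏ p ∈ P, p := Finset.prod_dvd_prod_of_subset _ _ _ hsub
    · rintro ⟨hdr, _⟩
      have hrk : (∏ p ∈ P, p ^ k) ∣ n := by
        refine Finset.prod_dvd_of_isRelPrime ?_ ?_
        · intro p hp q hq hpq
          refine Nat.coprime_iff_isRelPrime.mp ?_
          exact Nat.Coprime.pow k k ((Nat.coprime_primes (hPprime p hp) (hPprime q hq)).mpr hpq)
        · intro p hp
          exact (Finset.mem_filter.mp hp).2
      rw [Finset.prod_pow] at hrk
      have hdkn : d ^ k ∣ n := (pow_dvd_pow_of_dvd hdr k).trans hrk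
      exact ⟨⟨(dvd_pow_self d (by omega : k ≠ 0)).trans hdkn, hn0⟩, hdkn⟩
  have hsum1 : ∑ d ∈ n.divisors.filter (fun d => d ^ k ∣ n), (μ d : ℂ)
      = ∑ d ∈ r.divisors, (μ d : ℂ) := by
    rw [← Finset.sum_filter_of_ne (s := n.divisors.filter (fun d => d ^ k ∣ n))
        (p := fun d => Squarefree d)
        (fun d _ h => moebius_ne_zero_iff_squarefree.mp (by exact_mod_cast h)),
      ← Finset.sum_filter_of_ne (s := r.divisors) (p := fun d => Squarefree d)
        (fun d _ h => moebius_ne_zero_iff_squarefree.mp (by exact_mod_cast h))]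
    congr 1
    ext d
    constructor
    · intro hd
      have h1 := Finset.mem_filter.mp hd
      exact Finset.mem_filter.mpr ⟨(hmem d h1.2).mp h1.1, h1.2⟩
    · intro hd
      have h1 := Finset.mem_filter.mp hd
      exact Finset.mem_filter.mpr ⟨(hmem d h1.2).mpr h1.1, h1.2⟩
  have hsum2 : ∑ d ∈ r.divisors, (μ d : ℂ) = if r = 1 then 1 else 0 := by
    have := congrFun (congrArg (⇑) (coe_moebius_mul_coe_zeta (R := ℂ))) r
    rwa [coe_mul_zeta_apply, one_apply] at this
  have hiff : (r = 1) ↔ ∀ p : ℕ, p.Prime → ¬ (p ^ k ∣ n) := by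
    constructor
    · intro h1 p hp hpk
      have hpP : p ∈ P := Finset.mem_filter.mpr
        ⟨Nat.mem_primeFactors.mpr ⟨hp, (dvd_pow_self p (by omega : k ≠ 0)).trans hpk, hn0⟩, hpk⟩
      have : p ∣ r := Finset.dvd_prod_of_mem _ hpP
      rw [h1, Nat.dvd_one] at this
      exact hp.one_lt.ne' this
    · intro h
      have : P = ∅ := by
        rw [Finset.eq_empty_iff_forall_notMem]
        intro p hp
        exact h p (hPprime p hp) (Finset.mem_filter.mp hp).2
      rw [hr, this, Finset.prod_empty]
  rw [hsum1, hsum2, if_congr hiff rfl rfl]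


set_option maxHeartbeats 2000000 in
lemma key_identity (k : ℕ) (hk : 2 ≤ k) (q : ℝ) (hq0 : 0 ≤ q) (hq1 : q < 1) :
    (1 - (q : ℂ)) *
        ∑' n : {n : ℕ // 0 < n ∧ ∀ p : ℕ, p.Prime → ¬ (p ^ k ∣ n)}, (q : ℂ) ^ (n : ℕ)
      = ∑' d : ℕ, (μ d : ℂ) * ((1 - (q : ℂ)) * (q : ℂ) ^ (d ^ k) / (1 - (q : ℂ) ^ (d ^ k))) := by
  set x : ℂ := (q : ℂ) with hxdef
  have hx : ‖x‖ = q := by rw [hxdef, Complex.norm_real, Real.norm_eq_abs, abs_of_nonneg hq0]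
  have hxlt : ‖x‖ < 1 := by rw [hx]; exact hq1
  have hmu : ∀ d : ℕ, ‖(μ d : ℂ)‖ ≤ 1 := by
    intro d
    rw [show ((μ d : ℤ) : ℂ) = (((μ d : ℤ) : ℝ) : ℂ) by push_cast; ring, Complex.norm_real,
      Real.norm_eq_abs]
    exact_mod_cast ArithmeticFunction.abs_moebius_le_one
  set F : ℕ × ℕ → ℂ := fun p => (μ p.1 : ℂ) * x ^ (p.1 ^ k * (p.2 + 1)) with hF
  have hFnorm : ∀ p : ℕ × ℕ, ‖F p‖ ≤ q ^ p.1 * q ^ p.2 := by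
    rintro ⟨d, m⟩
    rcases Nat.eq_zero_or_pos d with rfl | hd
    · simp [hF]
      positivity
    · have hle : d + m ≤ d ^ k * (m + 1) := by
        have hdk : d ≤ d ^ k := Nat.le_self_pow (by omega) d
        nlinarith
      calc ‖F (d, m)‖ = ‖(μ d : ℂ)‖ * ‖x‖ ^ (d ^ k * (m + 1)) := by rw [hF]; simp [norm_pow]
        _ ≤ 1 * q ^ (d ^ k * (m + 1)) := by
            apply mul_le_mul (hmu d) le_rfl (by positivity) zero_le_one |>.trans
            rw [hx, one_mul]
        _ ≤ q ^ (d + m) := by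
            rw [one_mul]
            exact pow_le_pow_of_le_one hq0 hq1.le hle
        _ = q ^ d * q ^ m := pow_add q d m
  have hFsum : Summable F :=
    Summable.of_norm_bounded
      ((summable_geometric_of_lt_one hq0 hq1).mul_of_nonneg
        (summable_geometric_of_lt_one hq0 hq1) (fun _ => pow_nonneg hq0 _)
        (fun _ => pow_nonneg hq0 _)) hFnorm
  -- step A : subtype sum as indicator sum and divisor sums
  have hA : ∀ n : ℕ,
      Set.indicator {n : ℕ | 0 < n ∧ ∀ p : ℕ, p.Prime → ¬ (p ^ k ∣ n)} (fun n => x ^ n) n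
        = ∑ d ∈ n.divisors.filter (fun d => d ^ k ∣ n), (μ d : ℂ) * x ^ n := by
    intro n
    rcases Nat.eq_zero_or_pos n with rfl | hn
    · rw [Set.indicator_of_notMem (by simp)]
      simp
    · rw [← Finset.sum_mul, moebius_sum_kfree k (by omega) n hn]
      by_cases h : ∀ p : ℕ, p.Prime → ¬ (p ^ k ∣ n)
      · rw [if_pos h, one_mul, Set.indicator_of_mem (Set.mem_setOf.mpr ⟨hn, h⟩)]
      · rw [if_neg h, zero_mul, Set.indicator_of_notMem (fun hmem => h (Set.mem_setOf.mp hmem).2)]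
  have hstepA : ∑' n : {n : ℕ // 0 < n ∧ ∀ p : ℕ, p.Prime → ¬ (p ^ k ∣ n)}, x ^ (n : ℕ)
      = ∑' n : ℕ, ∑ d ∈ n.divisors.filter (fun d => d ^ k ∣ n), (μ d : ℂ) * x ^ n := by
    rw [show (∑' n : {n : ℕ // 0 < n ∧ ∀ p : ℕ, p.Prime → ¬ (p ^ k ∣ n)}, x ^ (n : ℕ))
      = ∑' n : {n : ℕ | 0 < n ∧ ∀ p : ℕ, p.Prime → ¬ (p ^ k ∣ n)}, x ^ (n : ℕ) from rfl,
      _root_.tsum_subtype]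
    exact tsum_congr hA
  -- step B : regroup the double sum along fibers of φ
  set φ : ℕ × ℕ → ℕ := fun p => p.1 ^ k * (p.2 + 1) with hφ
  have hGsum : Summable (fun c => F ((Equiv.sigmaFiberEquiv φ) c)) :=
    (Equiv.summable_iff _).mpr hFsum
  have hfib : ∀ n : ℕ, (∑' c : {p : ℕ × ℕ // φ p = n}, F c.val)
      = ∑ d ∈ n.divisors.filter (fun d => d ^ k ∣ n), (μ d : ℂ) * x ^ n := by
    intro n
    rcases Nat.eq_zero_or_pos n with rfl | hn
    · have : ∀ c : {p : ℕ × ℕ // φ p = 0}, F c.val = 0 := by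
        rintro ⟨⟨d, m⟩, hc⟩
        have hd : d = 0 := by
          simp only [hφ] at hc
          rcases Nat.mul_eq_zero.mp hc with h | h
          · exact pow_eq_zero_iff (by omega) |>.mp h
          · omega
        simp [hF, hd]
      rw [tsum_congr this, tsum_zero]
      simp
    · -- bijection between the fiber and the divisor finset
      have hn0 : n ≠ 0 := hn.ne'
      let A : Finset ℕ := n.divisors.filter (fun d => d ^ k ∣ n)
      have memA : ∀ d : ℕ, d ∈ A ↔ d ∣ n ∧ d ^ k ∣ n := by
        intro d
        simp only [A, Finset.mem_filter, Nat.mem_divisors]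
        tauto
      have hdpos : ∀ d ∈ A, 0 < d ^ k := by
        intro d hd
        have h1 := ((memA d).mp hd).1
        have : d ≠ 0 := by rintro rfl; exact hn0 (Nat.eq_zero_of_zero_dvd h1)
        positivity
      let e2 : {d : ℕ // d ∈ A} ≃ {p : ℕ × ℕ // φ p = n} :=
        { toFun := fun d => ⟨(d.val, n / d.val ^ k - 1), by
            obtain ⟨d, hd⟩ := d
            have hdk := ((memA d).mp hd).2
            have hpos := hdpos d hd
            have h1 : 1 ≤ n / d ^ k := (Nat.one_le_div_iff hpos).mpr (Nat.le_of_dvd hn hdk)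
            simp only [hφ]
            rw [Nat.sub_add_cancel h1, Nat.mul_div_cancel' hdk]⟩
          invFun := fun c => ⟨c.val.1, by
            obtain ⟨⟨d, m⟩, hc⟩ := c
            simp only [hφ] at hc
            have hdk : d ^ k ∣ n := ⟨m + 1, hc.symm⟩
            exact (memA d).mpr ⟨(dvd_pow_self d (by omega : k ≠ 0)).trans hdk, hdk⟩⟩
          left_inv := fun d => Subtype.ext rfl
          right_inv := by
            rintro ⟨⟨d, m⟩, hc⟩
            simp only [hφ] at hc
            have hd0 : 0 < d ^ k := by
              rcases Nat.eq_zero_or_pos (d ^ k) with h | h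
              · exfalso; apply hn0; rw [← hc, h, zero_mul]
              · exact h
            apply Subtype.ext
            simp only
            have : n / d ^ k = m + 1 := by
              rw [← hc, Nat.mul_div_cancel_left _ hd0]
            rw [this]
            simp }
      have h1 : ∀ c : {p : ℕ × ℕ // φ p = n}, F c.val = (μ c.val.1 : ℂ) * x ^ n := by
        rintro ⟨⟨d, m⟩, hc⟩
        simp only [hφ] at hc
        simp [hF, hc]
      rw [tsum_congr h1, ← e2.tsum_eq (fun c => (μ c.val.1 : ℂ) * x ^ n)]
      exact Finset.tsum_subtype A (fun d => (μ d : ℂ) * x ^ n)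
  have hstepB : ∑' n : ℕ, ∑ d ∈ n.divisors.filter (fun d => d ^ k ∣ n), (μ d : ℂ) * x ^ n
      = ∑' p : ℕ × ℕ, F p := by
    rw [← Equiv.tsum_eq (Equiv.sigmaFiberEquiv φ) F,
      Summable.tsum_sigma' (fun n => hGsum.comp_injective sigma_mk_injective) hGsum]
    exact tsum_congr fun n => (hfib n).symm
  -- step C/D : sum in the other order and evaluate the geometric series
  have hinner : ∀ d : ℕ, (∑' m : ℕ, F (d, m))
      = (μ d : ℂ) * (x ^ (d ^ k) * (1 - x ^ (d ^ k))⁻¹) := by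
    intro d
    rcases Nat.eq_zero_or_pos d with rfl | hd
    · simp [hF]
    · have hy : ‖x ^ (d ^ k)‖ < 1 := by
        rw [norm_pow, hx]
        exact pow_lt_one₀ hq0 hq1 (by positivity)
      have : ∀ m : ℕ, F (d, m) = (μ d : ℂ) * ((x ^ (d ^ k)) ^ m * x ^ (d ^ k)) := by
        intro m
        simp only [hF, mul_add, mul_one, pow_add, pow_mul]
      rw [tsum_congr this, tsum_mul_left, tsum_mul_right,
        tsum_geometric_of_norm_lt_one hy]
      ring
  have hstepC : ∑' p : ℕ × ℕ, F p
      = ∑' d : ℕ, (μ d : ℂ) * (x ^ (d ^ k) * (1 - x ^ (d ^ k))⁻¹) := by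
    rw [hFsum.tsum_prod' (fun d => hFsum.comp_injective
      (fun a b h => by simpa using congrArg Prod.snd h))]
    exact tsum_congr hinner
  rw [hstepA, hstepB, hstepC, ← tsum_mul_left]
  exact tsum_congr fun d => by rw [div_eq_mul_inv]; ring


lemma norm_moebius_le_one (d : ℕ) : ‖(μ d : ℂ)‖ ≤ 1 := by
  rw [show ((μ d : ℤ) : ℂ) = (((μ d : ℤ) : ℝ) : ℂ) by push_cast; ring, Complex.norm_real,
    Real.norm_eq_abs]
  exact_mod_cast ArithmeticFunction.abs_moebius_le_one


/-- For `k ≥ 2`, the `q`-density of the `k`-free positive integers tends to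
`1/ζ(k)` as `q → 1⁻`. -/
theorem qdensity_kfree (k : ℕ) (hk : 2 ≤ k) :
    Filter.Tendsto
      (fun q : ℝ =>
        (1 - (q : ℂ)) *
          ∑' n : {n : ℕ // 0 < n ∧ ∀ p : ℕ, p.Prime → ¬ (p ^ k ∣ n)},
            (q : ℂ) ^ (n : ℕ))
      (nhdsWithin 1 (Set.Ico (0 : ℝ) 1)) (nhds (riemannZeta k)⁻¹) := by
  set f : ℝ → ℕ → ℂ := fun q d =>
    (μ d : ℂ) * ((1 - (q : ℂ)) * (q : ℂ) ^ (d ^ k) / (1 - (q : ℂ) ^ (d ^ k))) with hf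
  set g : ℕ → ℂ := fun d => (μ d : ℂ) * (((d : ℂ)) ^ k)⁻¹ with hg
  have h_sum : Summable (fun d : ℕ => ((d : ℝ) ^ k)⁻¹) :=
    Real.summable_nat_pow_inv.mpr (by omega)
  -- termwise limits
  have h_lim : ∀ d : ℕ, Tendsto (fun q => f q d) (𝓝[Set.Ico (0:ℝ) 1] 1) (𝓝 (g d)) := by
    intro d
    rcases Nat.eq_zero_or_pos d with rfl | hd
    · have : (fun q : ℝ => f q 0) = fun _ => g 0 := by
        funext q; simp [hf, hg]
      rw [this]
      exact tendsto_const_nhds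
    · obtain ⟨m, hm⟩ : ∃ m : ℕ, m = d ^ k := ⟨_, rfl⟩
      have hm1 : 1 ≤ m := Nat.one_le_iff_ne_zero.mpr (by rw [hm]; positivity)
      set G : ℝ → ℂ := fun q => (μ d : ℂ) * ((q : ℂ) ^ m / ∑ j ∈ range m, (q : ℂ) ^ j) with hG
      have claim1 : ∀ q ∈ Set.Ico (0:ℝ) 1, G q = f q d := by
        rintro q ⟨hq0, hq1⟩
        have hgeom : (1 : ℂ) - (q : ℂ) ^ m = (1 - (q : ℂ)) * ∑ j ∈ range m, (q : ℂ) ^ j := by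
          linear_combination geom_sum_mul (q : ℂ) m
        have h1q : (1 : ℂ) - (q : ℂ) ≠ 0 := by
          rw [sub_ne_zero]
          intro h
          exact hq1.ne' (by exact_mod_cast h)
        have hsum_cast : (∑ j ∈ range m, (q : ℂ) ^ j) = ((∑ j ∈ range m, q ^ j : ℝ) : ℂ) := by
          push_cast; rfl
        have hSpos : (0:ℝ) < ∑ j ∈ range m, q ^ j := by
          have h01 : (1:ℝ) = q ^ 0 := by norm_num
          calc (0:ℝ) < 1 := one_pos
            _ ≤ ∑ j ∈ range m, q ^ j := by
                rw [h01]
                exact Finset.single_le_sum (f := fun j => q ^ j)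
                  (fun j _ => pow_nonneg hq0 j) (Finset.mem_range.mpr (by omega))
        have hsne : (∑ j ∈ range m, (q : ℂ) ^ j) ≠ 0 := by
          rw [hsum_cast]
          exact_mod_cast hSpos.ne'
        rw [hf, hG]
        simp only [← hm]
        rw [hgeom, mul_div_mul_left _ _ h1q]
      have claim2 : Tendsto G (𝓝 1) (𝓝 (g d)) := by
        have hnum : Continuous fun q : ℝ => (q : ℂ) ^ m := Complex.continuous_ofReal.pow m
        have hden : Continuous fun q : ℝ => ∑ j ∈ range m, (q : ℂ) ^ j :=
          continuous_finset_sum _ fun j _ => Complex.continuous_ofReal.pow j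
        have hne : (∑ j ∈ range m, ((1:ℝ) : ℂ) ^ j) ≠ 0 := by
          simp only [Complex.ofReal_one, one_pow, Finset.sum_const, card_range, nsmul_eq_mul,
            mul_one]
          exact_mod_cast (by omega : m ≠ 0)
        have h2 : Tendsto G (𝓝 1)
            (𝓝 ((μ d : ℂ) * ((((1:ℝ) : ℂ)) ^ m / ∑ j ∈ range m, (((1:ℝ) : ℂ)) ^ j))) :=
          Tendsto.const_mul _ ((hnum.tendsto 1).div (hden.tendsto 1) hne)
        have hval : g d = (μ d : ℂ) * ((((1:ℝ) : ℂ)) ^ m / ∑ j ∈ range m, (((1:ℝ) : ℂ)) ^ j) := by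
          simp only [Complex.ofReal_one, one_pow, Finset.sum_const, card_range, nsmul_eq_mul,
            mul_one, hg, hm, one_div]
          push_cast
          ring
        rw [hval]
        exact h2
      refine (claim2.mono_left nhdsWithin_le_nhds).congr' ?_
      filter_upwards [eventually_mem_nhdsWithin] with q hq using claim1 q hq
  -- uniform bound
  have h_bound : ∀ᶠ q in 𝓝[Set.Ico (0:ℝ) 1] 1, ∀ d : ℕ, ‖f q d‖ ≤ ((d : ℝ) ^ k)⁻¹ := by
    filter_upwards [eventually_mem_nhdsWithin] with q hq
    obtain ⟨hq0, hq1⟩ := hq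
    intro d
    rcases Nat.eq_zero_or_pos d with rfl | hd
    · simp [hf, zero_pow (by omega : k ≠ 0)]
    · obtain ⟨m, hm⟩ : ∃ m : ℕ, m = d ^ k := ⟨_, rfl⟩
      have hm1 : 1 ≤ m := Nat.one_le_iff_ne_zero.mpr (by rw [hm]; positivity)
      have hqm1 : q ^ m < 1 := pow_lt_one₀ hq0 hq1 (by omega)
      have hqmnn : 0 ≤ q ^ m := pow_nonneg hq0 m
      have hcast : (1 - (q:ℂ)) * (q:ℂ) ^ m / (1 - (q:ℂ) ^ m)
          = (((1 - q) * q ^ m / (1 - q ^ m) : ℝ) : ℂ) := by push_cast; ring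
      have hS : 1 - q ^ m = (1 - q) * ∑ j ∈ range m, q ^ j := by
        linear_combination geom_sum_mul q m
      have hSpos : (0:ℝ) < ∑ j ∈ range m, q ^ j := by
        calc (0:ℝ) < 1 := one_pos
          _ = q ^ 0 := by norm_num
          _ ≤ ∑ j ∈ range m, q ^ j :=
              Finset.single_le_sum (f := fun j => q ^ j) (fun j _ => pow_nonneg hq0 j)
                (Finset.mem_range.mpr (by omega))
      have hr : (1 - q) * q ^ m / (1 - q ^ m) = q ^ m / ∑ j ∈ range m, q ^ j := by
        rw [hS]
        exact mul_div_mul_left _ _ (by linarith : (1:ℝ) - q ≠ 0)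
      have hmpos : (0:ℝ) < (m:ℝ) := by exact_mod_cast hm1
      have hle : q ^ m / ∑ j ∈ range m, q ^ j ≤ ((m:ℝ))⁻¹ := by
        have hsum : (m:ℝ) * q ^ m ≤ ∑ j ∈ range m, q ^ j := by
          calc (m:ℝ) * q ^ m = ∑ _j ∈ range m, q ^ m := by
                rw [Finset.sum_const, card_range, nsmul_eq_mul]
            _ ≤ ∑ j ∈ range m, q ^ j :=
                Finset.sum_le_sum fun j hj => pow_le_pow_of_le_one hq0 hq1.le
                  (le_of_lt (Finset.mem_range.mp hj))
        rw [inv_eq_one_div, div_le_div_iff₀ hSpos hmpos]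
        nlinarith
      have hrnn : 0 ≤ (1 - q) * q ^ m / (1 - q ^ m) :=
        div_nonneg (mul_nonneg (by linarith) hqmnn) (by linarith)
      have hnorm : ‖f q d‖ ≤ (1 - q) * q ^ m / (1 - q ^ m) := by
        rw [hf]
        simp only [← hm]
        rw [norm_mul, hcast, Complex.norm_real, Real.norm_eq_abs, abs_of_nonneg hrnn]
        calc ‖(μ d : ℂ)‖ * ((1 - q) * q ^ m / (1 - q ^ m))
            ≤ 1 * ((1 - q) * q ^ m / (1 - q ^ m)) :=
              mul_le_mul_of_nonneg_right (norm_moebius_le_one d) hrnn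
          _ = (1 - q) * q ^ m / (1 - q ^ m) := one_mul _
      have hcast2 : ((m:ℝ))⁻¹ = ((d : ℝ) ^ k)⁻¹ := by rw [hm]; push_cast; ring
      calc ‖f q d‖ ≤ (1 - q) * q ^ m / (1 - q ^ m) := hnorm
        _ = q ^ m / ∑ j ∈ range m, q ^ j := hr
        _ ≤ ((m:ℝ))⁻¹ := hle
        _ = ((d : ℝ) ^ k)⁻¹ := hcast2
  -- the limit of the termwise sums
  have hmain : Tendsto (fun q : ℝ => ∑' d : ℕ, f q d) (𝓝[Set.Ico (0:ℝ) 1] 1)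
      (𝓝 (∑' d : ℕ, g d)) :=
    tendsto_tsum_of_dominated_convergence h_sum h_lim h_bound
  -- identify the limit with ζ(k)⁻¹
  have hk1 : 1 < ((k : ℂ)).re := by
    rw [Complex.natCast_re]
    exact_mod_cast by omega
  have hzeta : riemannZeta k * LSeries (fun n => (μ n : ℂ)) k = 1 := by
    rw [← LSeries_zeta_eq_riemannZeta hk1]
    exact LSeries_zeta_mul_Lseries_moebius hk1
  have htsumg : ∑' d : ℕ, g d = LSeries (fun n => (μ n : ℂ)) k := by
    refine tsum_congr fun d => ?_
    rcases Nat.eq_zero_or_pos d with rfl | hd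
    · simp [hg, LSeries.term_zero]
    · rw [hg, LSeries.term_of_ne_zero hd.ne' (fun n => (μ n : ℂ)), Complex.cpow_natCast,
        div_eq_mul_inv]
  have hlimit : ∑' d : ℕ, g d = (riemannZeta (k : ℂ))⁻¹ := by
    rw [htsumg]
    exact eq_inv_of_mul_eq_one_left (by rw [mul_comm]; exact hzeta)
  rw [← hlimit]
  refine hmain.congr' ?_
  filter_upwards [eventually_mem_nhdsWithin] with q hq
  exact (key_identity k hk q hq.1 hq.2).symm
end

section
/- Smallest-part Möbius generating function identity: for S ⊆ ℕ and |q| < 1 (or as formal power series), ∑_{λ: sm(λ) ∈ S} μ*_P(λ) q^{|λ|} = (q;q)_∞ · ∑_{n∈S} q^n/(q;q)_n, where the sum on the left is over nonempty partitions λ into distinct parts whose smallest part lies in S, μ*_P(λ) := -μ_P(λ) = (-1)^{ℓ(λ)+1} for distinct-part partitions, sm(λ) is the smallest part, and (q;q)_n = ∏_{k=1}^n (1-q^k). -/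
open Finset PowerSeries
open scoped Classical

/-- The partition Möbius function. -/
noncomputable def muP (l : Multiset ℕ) : ℂ :=
  if l.Nodup then (-1 : ℂ) ^ (Multiset.card l) else 0

/-- Partition Dirichlet convolution `(a*b)(λ) = ∑_{δ|λ} a(δ) b(λ/δ)`. -/
noncomputable def pconv (a b : Multiset ℕ → ℂ) (l : Multiset ℕ) : ℂ :=
  ∑ d ∈ l.powerset.toFinset, a d * b (l - d)

/-- Smallest part of a partition (`0` for the empty partition). -/
def smPart (l : Multiset ℕ) : ℕ := WithTop.untopD 0 (l.toFinset.min)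

/-- Largest part of a partition (`0` for the empty partition). -/
def lgPart (l : Multiset ℕ) : ℕ := WithBot.unbotD 0 (l.toFinset.max)

/-- The formal power series `∑_{λ : P(λ)} f(λ) q^{|λ|}`. -/
noncomputable def psOn (P : Multiset ℕ → Prop) (f : Multiset ℕ → ℂ) :
    PowerSeries ℂ :=
  PowerSeries.mk fun n => ∑ p : Nat.Partition n, if P p.parts then f p.parts else 0

/-- The finite `q`-Pochhammer symbol `(q;q)_n = ∏_{k=1}^n (1-q^k)`. -/
noncomputable def qPochFin (n : ℕ) : PowerSeries ℂ :=
  ∏ k ∈ Finset.range n, (1 - (PowerSeries.X : PowerSeries ℂ) ^ (k + 1))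

/-- `(q;q)_∞ = ∏_{k≥1}(1-q^k)`, defined coefficientwise (the partial
products stabilize in each degree). -/
noncomputable def qPochInf : PowerSeries ℂ :=
  PowerSeries.mk fun n => PowerSeries.coeff n (qPochFin n)

/-- `(q^{n+1};q)_∞ = ∏_{k≥n+1}(1-q^k)`, defined coefficientwise. -/
noncomputable def qPochInfFrom (n : ℕ) : PowerSeries ℂ :=
  PowerSeries.mk fun m =>
    PowerSeries.coeff m
      (∏ k ∈ Finset.Icc (n + 1) m, (1 - (PowerSeries.X : PowerSeries ℂ) ^ k))

/-- `∑_{n∈S} q^n/(q;q)_n`, defined coefficientwise (the `n`-th term has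
order at least `n`). -/
noncomputable def sumSser (S : Set ℕ) : PowerSeries ℂ :=
  PowerSeries.mk fun m => ∑ n ∈ Finset.Icc 1 m,
    if n ∈ S then PowerSeries.coeff m (PowerSeries.X ^ n * (qPochFin n)⁻¹) else 0

lemma coeff_prodOneSub (s : Finset ℕ) (c : ℕ) :
    PowerSeries.coeff c (∏ k ∈ s, (1 - (PowerSeries.X : PowerSeries ℂ) ^ k)) =
    ∑ T ∈ s.powerset.filter (fun T => ∑ k ∈ T, k = c), (-1 : ℂ) ^ T.card := by
  have h1 : ∀ k : ℕ, (1 - (PowerSeries.X : PowerSeries ℂ) ^ k)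
      = (-(PowerSeries.X : PowerSeries ℂ) ^ k) + 1 := by intro k; ring
  simp_rw [h1]
  rw [Finset.prod_add]
  simp only [Finset.prod_const_one, mul_one]
  rw [map_sum]
  have h2 : ∀ T : Finset ℕ, (PowerSeries.coeff c) (∏ k ∈ T, -(PowerSeries.X : PowerSeries ℂ) ^ k)
      = if ∑ k ∈ T, k = c then (-1 : ℂ) ^ T.card else 0 := by
    intro T
    have : ∏ k ∈ T, -(PowerSeries.X : PowerSeries ℂ) ^ k
        = (PowerSeries.C) ((-1 : ℂ) ^ T.card) * (PowerSeries.X : PowerSeries ℂ) ^ (∑ k ∈ T, k) := by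
      rw [map_pow, map_neg, map_one, ← Finset.prod_pow_eq_pow_sum, ← Finset.prod_const,
        ← Finset.prod_mul_distrib]
      exact Finset.prod_congr rfl (fun k _ => by ring)
    rw [this, PowerSeries.coeff_C_mul, PowerSeries.coeff_X_pow]
    split_ifs with h h' h'
    · rw [mul_one]
    · exact absurd h.symm h'
    · exact absurd h'.symm h
    · rw [mul_zero]
  simp_rw [h2]
  rw [Finset.sum_filter]

lemma qPochFin_eq (n : ℕ) :
    qPochFin n = ∏ k ∈ Finset.Icc 1 n, (1 - (PowerSeries.X : PowerSeries ℂ) ^ k) := by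
  unfold qPochFin
  rw [show Finset.Icc 1 n = Finset.Ico 1 (n+1) by rw [Finset.Ico_add_one_right_eq_Icc],
    Finset.prod_Ico_eq_prod_range]
  simp [Nat.add_comm]

lemma constCoeff_qPochFin (n : ℕ) : PowerSeries.constantCoeff (qPochFin n) = 1 := by
  unfold qPochFin
  rw [map_prod]
  refine Finset.prod_eq_one fun k _ => ?_
  simp

lemma qPochFin_mul_inv (n : ℕ) : qPochFin n * (qPochFin n)⁻¹ = 1 :=
  PowerSeries.mul_inv_cancel _ (by rw [constCoeff_qPochFin]; exact one_ne_zero)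

lemma qPochFin_split {n m : ℕ} (h : n ≤ m) :
    qPochFin m = qPochFin n * ∏ k ∈ Finset.Icc (n+1) m, (1 - (PowerSeries.X : PowerSeries ℂ) ^ k) := by
  rw [qPochFin_eq, qPochFin_eq, show Finset.Icc 1 n = Finset.Ioc 0 n by rfl,
    show Finset.Icc (n+1) m = Finset.Ioc n m by rw [← Finset.Icc_add_one_left_eq_Ioc],
    show Finset.Icc 1 m = Finset.Ioc 0 m by rfl,
    Finset.prod_Ioc_consecutive _ (Nat.zero_le n) h]

lemma qPochFin_mul_inv_eq {n m : ℕ} (h : n ≤ m) :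
    qPochFin m * (qPochFin n)⁻¹ =
      ∏ k ∈ Finset.Icc (n+1) m, (1 - (PowerSeries.X : PowerSeries ℂ) ^ k) := by
  rw [qPochFin_split h, mul_comm (qPochFin n), mul_assoc, qPochFin_mul_inv, mul_one]

lemma filter_powerset_congr (a i : ℕ) {n n' : ℕ} (hn : i ≤ n) (hn' : n ≤ n') :
    (Finset.Icc a n).powerset.filter (fun T => ∑ k ∈ T, k = i) =
    (Finset.Icc a n').powerset.filter (fun T => ∑ k ∈ T, k = i) := by
  ext T
  simp only [Finset.mem_filter, Finset.mem_powerset]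
  constructor
  · rintro ⟨hT, hs⟩
    exact ⟨hT.trans (Finset.Icc_subset_Icc_right hn'), hs⟩
  · rintro ⟨hT, hs⟩
    refine ⟨fun x hx => ?_, hs⟩
    have hx' := hT hx
    rw [Finset.mem_Icc] at hx' ⊢
    have : x ≤ ∑ k ∈ T, k := Finset.single_le_sum (f := fun k => k) (fun _ _ => Nat.zero_le _) hx
    exact ⟨hx'.1, by omega⟩

lemma smPart_eq {l : Multiset ℕ} {n : ℕ} (hmem : n ∈ l) (hle : ∀ x ∈ l, n ≤ x) :
    smPart l = n := by
  have hne : l.toFinset.Nonempty := ⟨n, Multiset.mem_toFinset.mpr hmem⟩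
  have h : l.toFinset.min' hne = n :=
    le_antisymm (Finset.min'_le _ _ (Multiset.mem_toFinset.mpr hmem))
      (Finset.le_min' _ _ _ (fun x hx => hle x (Multiset.mem_toFinset.mp hx)))
  unfold smPart
  rw [← Finset.coe_min' hne, h, WithTop.untopD_coe]

lemma smPart_spec {l : Multiset ℕ} (h1 : 1 ≤ smPart l) :
    smPart l ∈ l ∧ ∀ x ∈ l, smPart l ≤ x := by
  have hne : l.toFinset.Nonempty := by
    by_contra h
    rw [Finset.not_nonempty_iff_eq_empty] at h
    unfold smPart at h1
    rw [h] at h1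
    simp at h1
  have h : smPart l = l.toFinset.min' hne := by
    unfold smPart
    rw [← Finset.coe_min' hne, WithTop.untopD_coe]
  constructor
  · rw [h]; exact Multiset.mem_toFinset.mp (Finset.min'_mem _ _)
  · intro x hx
    rw [h]
    exact Finset.min'_le _ _ (Multiset.mem_toFinset.mpr hx)

lemma key (m n : ℕ) (hn : 1 ≤ n) (hnm : n ≤ m) :
    (∑ p : Nat.Partition m, if smPart p.parts = n then -muP p.parts else 0)
    = ∑ T ∈ (Finset.Icc (n+1) m).powerset.filter (fun T => n + ∑ k ∈ T, k = m),
        (-1 : ℂ) ^ T.card := by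
  have step : ∀ p : Nat.Partition m,
      (if smPart p.parts = n then -muP p.parts else 0)
      = (if smPart p.parts = n ∧ p.parts.Nodup
          then (-1 : ℂ) ^ (Multiset.card p.parts + 1) else 0) := by
    intro p
    unfold muP
    by_cases h1 : smPart p.parts = n <;> by_cases h2 : p.parts.Nodup <;>
      simp [h1, h2, pow_succ] <;> ring
  simp_rw [step]
  rw [← Finset.sum_filter]
  refine Finset.sum_bij' (fun p _ => p.parts.toFinset.erase n)
    (fun T _ => ⟨n ::ₘ T.val, ?_, ?_⟩) ?_ ?_ ?_ ?_ ?_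
  · -- parts_pos
    rename_i hT
    intro i hi
    rw [Multiset.mem_cons] at hi
    rcases hi with h | h
    · omega
    · have := (Finset.mem_filter.mp hT).1
      rw [Finset.mem_powerset] at this
      have := this h
      rw [Finset.mem_Icc] at this
      omega
  · -- parts_sum
    rename_i hT
    have hsum := (Finset.mem_filter.mp hT).2
    rw [Multiset.sum_cons]
    have : ∑ k ∈ T, k = T.val.sum := by
      show (Multiset.map (fun k => k) T.val).sum = T.val.sum
      rw [Multiset.map_id']
    omega
  · -- hi : image in target
    intro p hp
    obtain ⟨-, h1, h2⟩ := Finset.mem_filter.mp hp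
    have hspec := smPart_spec (l := p.parts) (by omega)
    rw [h1] at hspec
    obtain ⟨hmem, hle⟩ := hspec
    have htv : p.parts.toFinset.val = p.parts := Multiset.dedup_eq_self.mpr h2
    rw [Finset.mem_filter, Finset.mem_powerset]
    constructor
    · intro x hx
      obtain ⟨hxn, hxt⟩ := Finset.mem_erase.mp hx
      have hxp : x ∈ p.parts := Multiset.mem_toFinset.mp hxt
      have h3 := hle x hxp
      have h4 : x ≤ p.parts.sum := Multiset.le_sum_of_mem hxp
      rw [p.parts_sum] at h4
      rw [Finset.mem_Icc]
      omega
    · have hnt : n ∈ p.parts.toFinset := Multiset.mem_toFinset.mpr hmem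
      have h5 := Finset.sum_erase_add p.parts.toFinset (fun x => x) hnt
      have h6 : ∑ x ∈ p.parts.toFinset, x = p.parts.sum := by
        show (Multiset.map (fun x => x) p.parts.toFinset.val).sum = p.parts.sum
        rw [Multiset.map_id', htv]
      rw [p.parts_sum] at h6
      omega
  · -- hj : preimage in source
    intro T hT
    have hTs := (Finset.mem_filter.mp hT).1
    rw [Finset.mem_powerset] at hTs
    have hgt : ∀ x ∈ T, n + 1 ≤ x := fun x hx => (Finset.mem_Icc.mp (hTs hx)).1
    have hnT : n ∉ T.val := fun h => by have := hgt n h; omega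
    rw [Finset.mem_filter]
    refine ⟨Finset.mem_univ _, ?_, ?_⟩
    · refine smPart_eq (Multiset.mem_cons_self n T.val) ?_
      intro x hx
      rw [Multiset.mem_cons] at hx
      rcases hx with h | h
      · omega
      · have := hgt x h; omega
    · exact Multiset.nodup_cons.mpr ⟨hnT, T.nodup⟩
  · -- left inverse
    intro p hp
    obtain ⟨-, h1, h2⟩ := Finset.mem_filter.mp hp
    have hspec := smPart_spec (l := p.parts) (by omega)
    rw [h1] at hspec
    apply Nat.Partition.ext
    have htv : p.parts.toFinset.val = p.parts := Multiset.dedup_eq_self.mpr h2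
    show n ::ₘ (p.parts.toFinset.erase n).val = p.parts
    rw [Finset.erase_val, htv, Multiset.cons_erase hspec.1]
  · -- right inverse
    intro T hT
    have hTs := (Finset.mem_filter.mp hT).1
    rw [Finset.mem_powerset] at hTs
    have hnT : n ∉ T := fun h => by
      have := (Finset.mem_Icc.mp (hTs h)).1; omega
    show (n ::ₘ T.val).toFinset.erase n = T
    rw [Multiset.toFinset_cons, Finset.val_toFinset, Finset.erase_insert hnT]
  · -- values agree
    intro p hp
    obtain ⟨-, h1, h2⟩ := Finset.mem_filter.mp hp
    have hspec := smPart_spec (l := p.parts) (by omega)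
    rw [h1] at hspec
    have hnt : n ∈ p.parts.toFinset := Multiset.mem_toFinset.mpr hspec.1
    have hcard : p.parts.toFinset.card = (p.parts.toFinset.erase n).card + 1 := by
      rw [Finset.card_erase_of_mem hnt]
      have := Finset.card_pos.mpr ⟨n, hnt⟩
      omega
    have htv : p.parts.toFinset.val = p.parts := Multiset.dedup_eq_self.mpr h2
    have hcard2 : Multiset.card p.parts = p.parts.toFinset.card := by
      rw [Finset.card_def, htv]
    rw [hcard2, hcard]
    ring

lemma coeff_qPochFin_stab {i n n' : ℕ} (h1 : i ≤ n) (h2 : n ≤ n') :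
    PowerSeries.coeff i (qPochFin n) = PowerSeries.coeff i (qPochFin n') := by
  rw [qPochFin_eq, qPochFin_eq, coeff_prodOneSub, coeff_prodOneSub,
    filter_powerset_congr 1 i h1 h2]

/-- Smallest-part Möbius generating function identity:
`∑_{sm(λ)∈S} μ*_P(λ) q^{|λ|} = (q;q)_∞ ∑_{n∈S} q^n/(q;q)_n`
as formal power series, where `μ*_P = -μ_P`. -/
theorem smallest_part_moebius_gf (S : Set ℕ) (hS : 0 ∉ S) :
    psOn (fun l => smPart l ∈ S) (fun l => -muP l) = qPochInf * sumSser S := by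
  apply PowerSeries.ext
  intro m
  simp only [psOn, PowerSeries.coeff_mk]
  have hL : (∑ p : Nat.Partition m, if smPart p.parts ∈ S then -muP p.parts else 0)
      = ∑ n ∈ Finset.Icc 1 m, if n ∈ S then
          (∑ p : Nat.Partition m, if smPart p.parts = n then -muP p.parts else 0) else 0 := by
    have h1 : ∀ p : Nat.Partition m,
        (if smPart p.parts ∈ S then -muP p.parts else 0)
        = ∑ n ∈ Finset.Icc 1 m, if smPart p.parts = n then
            (if n ∈ S then -muP p.parts else 0) else 0 := by
      intro p
      rw [Finset.sum_ite_eq]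
      by_cases h : smPart p.parts ∈ Finset.Icc 1 m
      · rw [if_pos h]
      · rw [if_neg h]
        rcases Nat.eq_zero_or_pos (smPart p.parts) with h0 | h0
        · rw [h0, if_neg hS]
        · exfalso
          apply h
          rw [Finset.mem_Icc]
          have hspec := smPart_spec (l := p.parts) h0
          have hle := Multiset.le_sum_of_mem hspec.1
          rw [p.parts_sum] at hle
          exact ⟨h0, hle⟩
    simp_rw [h1]
    rw [Finset.sum_comm]
    refine Finset.sum_congr rfl fun n _ => ?_
    by_cases hn : n ∈ S <;> simp [hn]
  rw [hL, PowerSeries.coeff_mul]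
  have hq : ∀ i ≤ m, PowerSeries.coeff i qPochInf = PowerSeries.coeff i (qPochFin m) := by
    intro i hi
    rw [qPochInf, PowerSeries.coeff_mk]
    exact coeff_qPochFin_stab (le_refl i) hi
  have hs : ∀ j ≤ m, PowerSeries.coeff j (sumSser S)
      = ∑ n ∈ Finset.Icc 1 m, if n ∈ S then
          PowerSeries.coeff j ((PowerSeries.X : PowerSeries ℂ) ^ n * (qPochFin n)⁻¹) else 0 := by
    intro j hj
    rw [sumSser, PowerSeries.coeff_mk]
    refine Finset.sum_subset (Finset.Icc_subset_Icc_right hj) ?_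
    intro n hn hn'
    rw [Finset.mem_Icc] at hn hn'
    have hz : PowerSeries.coeff j ((PowerSeries.X : PowerSeries ℂ) ^ n * (qPochFin n)⁻¹) = 0 := by
      rw [mul_comm, PowerSeries.coeff_mul_X_pow', if_neg (by omega)]
    rw [hz, ite_self]
  have step1 : ∑ p ∈ Finset.HasAntidiagonal.antidiagonal m,
        PowerSeries.coeff p.1 qPochInf * PowerSeries.coeff p.2 (sumSser S)
      = ∑ n ∈ Finset.Icc 1 m, if n ∈ S then
          PowerSeries.coeff m (qPochFin m * ((PowerSeries.X : PowerSeries ℂ) ^ n * (qPochFin n)⁻¹)) else 0 := by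
    have h2 : ∀ p ∈ Finset.HasAntidiagonal.antidiagonal m,
        PowerSeries.coeff p.1 qPochInf * PowerSeries.coeff p.2 (sumSser S)
        = ∑ n ∈ Finset.Icc 1 m, if n ∈ S then
            PowerSeries.coeff p.1 (qPochFin m) *
              PowerSeries.coeff p.2 ((PowerSeries.X : PowerSeries ℂ) ^ n * (qPochFin n)⁻¹) else 0 := by
      intro p hp
      rw [Finset.HasAntidiagonal.mem_antidiagonal] at hp
      rw [hq p.1 (by omega), hs p.2 (by omega), Finset.mul_sum]
      refine Finset.sum_congr rfl fun n _ => ?_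
      by_cases hn : n ∈ S <;> simp [hn]
    rw [Finset.sum_congr rfl h2, Finset.sum_comm]
    refine Finset.sum_congr rfl fun n _ => ?_
    by_cases hn : n ∈ S
    · simp only [hn, if_true]
      rw [PowerSeries.coeff_mul]
    · simp [hn]
  rw [step1]
  refine Finset.sum_congr rfl fun n hn => ?_
  rw [Finset.mem_Icc] at hn
  by_cases hnS : n ∈ S
  · simp only [hnS, if_true]
    rw [key m n hn.1 hn.2]
    rw [show qPochFin m * ((PowerSeries.X : PowerSeries ℂ) ^ n * (qPochFin n)⁻¹)
        = (qPochFin m * (qPochFin n)⁻¹) * (PowerSeries.X : PowerSeries ℂ) ^ n from by ring,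
      qPochFin_mul_inv_eq hn.2, PowerSeries.coeff_mul_X_pow', if_pos hn.2,
      coeff_prodOneSub]
    refine Finset.sum_congr ?_ fun T _ => rfl
    refine Finset.filter_congr fun T hT => ?_
    constructor
    · intro h; omega
    · intro h; omega
  · simp [hnS]
end

section
/- Largest-part/smallest-part duality of generating functions: as formal power series in q, ∑_{λ: sm(λ) ∈ S} μ*_P(λ) q^{|λ|} = (∑_{λ: lg(λ) ∈ S} q^{|λ|}) · (q;q)_∞, equivalently ∑_{λ: sm(λ)∈S} μ*_P(λ) q^{|λ|} equals the quotient of the generating function of partitions with largest part in S by the generating function of all partitions. -/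
open Finset PowerSeries
open scoped Classical

/-- Finset of partitions of `n` as multisets. -/
noncomputable def Pn (n : ℕ) : Finset (Multiset ℕ) :=
  ((n • ((Finset.Icc 1 n).val)).powerset.toFinset).filter (fun m => m.sum = n)

lemma mem_Pn {n : ℕ} {m : Multiset ℕ} : m ∈ Pn n ↔ m.sum = n ∧ ∀ x ∈ m, 0 < x := by
  constructor
  · rintro hm
    simp only [Pn, Finset.mem_filter, Multiset.mem_toFinset, Multiset.mem_powerset] at hm
    refine ⟨hm.2, fun x hx => ?_⟩
    have := Multiset.mem_of_le hm.1 hx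
    simp only [Multiset.mem_nsmul] at this
    have := Finset.mem_Icc.1 (Finset.mem_def.2 this.2)
    omega
  · rintro ⟨hsum, hpos⟩
    simp only [Pn, Finset.mem_filter, Multiset.mem_toFinset, Multiset.mem_powerset]
    refine ⟨Multiset.le_iff_count.2 fun k => ?_, hsum⟩
    rw [Multiset.count_nsmul]
    by_cases hk : k ∈ m
    · have hk1 : 1 ≤ k := hpos k hk
      have hkn : k ≤ n := by
        rw [← hsum]; exact Multiset.le_sum_of_mem hk
      have : Multiset.count k ((Finset.Icc 1 n).val) = 1 := by
        rw [Multiset.count_eq_one_of_mem (Finset.Icc 1 n).nodup]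
        simp [Finset.mem_Icc]; omega
      rw [this, mul_one]
      have hcs : Multiset.card m • 1 ≤ m.sum := Multiset.card_nsmul_le_sum hpos
      simp only [smul_eq_mul, mul_one] at hcs
      calc Multiset.count k m ≤ Multiset.card m := Multiset.count_le_card _ _
        _ ≤ m.sum := hcs
        _ = n := hsum
    · simp [Multiset.count_eq_zero_of_notMem hk]

lemma sum_partition (n : ℕ) (f : Multiset ℕ → ℂ) :
    ∑ p : Nat.Partition n, f p.parts = ∑ m ∈ Pn n, f m := by
  apply Finset.sum_bij (fun p _ => p.parts)
  · intro p _
    exact mem_Pn.2 ⟨p.parts_sum, fun x hx => p.parts_pos hx⟩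
  · intro p _ q _ h
    exact Nat.Partition.ext h
  · intro m hm
    exact ⟨⟨m, fun {x} hx => (mem_Pn.1 hm).2 x hx, (mem_Pn.1 hm).1⟩, Finset.mem_univ _, rfl⟩
  · intro p _; rfl

lemma coeff_qPochFin_stable {n N : ℕ} (h : n ≤ N) :
    coeff n (qPochFin N) = coeff n (qPochFin n) := by
  obtain ⟨M, rfl⟩ := Nat.exists_eq_add_of_le h
  induction M with
  | zero => rfl
  | succ M ih =>
    have : qPochFin (n + (M+1)) = qPochFin (n + M) * (1 - X ^ (n + M + 1)) := by
      rw [qPochFin, qPochFin, ← add_assoc, Finset.prod_range_succ]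
    rw [this, mul_sub, mul_one, map_sub, coeff_mul_X_pow', if_neg (by omega), sub_zero, ih (by omega)]

lemma coeff_qPochInf {n N : ℕ} (h : n ≤ N) :
    coeff n qPochInf = coeff n (qPochFin N) := by
  rw [qPochInf, coeff_mk, coeff_qPochFin_stable h]

lemma coeff_qPochFin (N j : ℕ) :
    coeff j (qPochFin N) =
      ∑ t ∈ (Finset.range N).powerset, if (∑ k ∈ t, (k+1)) = j then (-1:ℂ)^t.card else 0 := by
  have : qPochFin N = ∑ t ∈ (Finset.range N).powerset,
      (PowerSeries.C ((-1:ℂ)^t.card)) * X ^ (∑ k ∈ t, (k+1)) := by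
    rw [qPochFin]
    have : ∀ k, (1 : PowerSeries ℂ) - X ^ (k+1) = (-X^(k+1)) + 1 := by intro k; ring
    simp_rw [this, Finset.prod_add, Finset.prod_const_one, mul_one]
    refine Finset.sum_congr rfl fun t _ => ?_
    rw [show ∏ k ∈ t, -(X:PowerSeries ℂ)^(k+1) = ∏ k ∈ t, ((-1 : ℂ⟦X⟧) * X^(k+1)) from
      Finset.prod_congr rfl (fun k _ => by ring)]
    rw [Finset.prod_mul_distrib, Finset.prod_const, Finset.prod_pow_eq_pow_sum]
    rw [show ((-1 : ℂ⟦X⟧)) = PowerSeries.C (-1) by simp]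
    rw [← map_pow]
  rw [this, map_sum]
  refine Finset.sum_congr rfl fun t _ => ?_
  rw [PowerSeries.coeff_C_mul, PowerSeries.coeff_X_pow]
  by_cases h : (∑ k ∈ t, (k+1)) = j
  · simp [h]
  · simp [h, Ne.symm h]

lemma map_sub_one_nodup {m : Multiset ℕ} (hm : m.Nodup) (hpos : ∀ x ∈ m, 0 < x) :
    (Multiset.map (· - 1) m).Nodup :=
  hm.map_on (fun a ha b hb h => by have := hpos a ha; have := hpos b hb; omega)

lemma map_add_sub (m : Multiset ℕ) (hpos : ∀ x ∈ m, 0 < x) :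
    Multiset.map (· + 1) (Multiset.map (· - 1) m) = m := by
  rw [Multiset.map_map]
  conv_rhs => rw [← Multiset.map_id m]
  apply Multiset.map_congr rfl
  intro x hx
  have := hpos x hx
  simp only [Function.comp_apply, id_eq]
  omega

lemma distinct_sum (n : ℕ) :
    (∑ t ∈ (Finset.range n).powerset, if (∑ k ∈ t, (k+1)) = n then (-1:ℂ)^t.card else 0)
      = ∑ m ∈ Pn n, muP m := by
  rw [← Finset.sum_filter]
  have h2 : ∑ m ∈ Pn n, muP m
      = ∑ m ∈ (Pn n).filter (fun m => m.Nodup), (-1:ℂ)^(Multiset.card m) := by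
    rw [Finset.sum_filter]
    refine Finset.sum_congr rfl fun m _ => by simp [muP]
  rw [h2]
  have wsum : ∀ t : Finset ℕ, (Multiset.map (· + 1) t.val).sum = ∑ k ∈ t, (k+1) := fun t => rfl
  apply Finset.sum_nbij' (i := fun t => Multiset.map (· + 1) t.val)
    (j := fun m => (Multiset.map (· - 1) m).toFinset)
  · intro t ht
    simp only [Finset.mem_filter, Finset.mem_powerset] at ht ⊢
    refine ⟨mem_Pn.2 ⟨by rw [wsum, ht.2], ?_⟩, ?_⟩
    · intro x hx
      simp only [Multiset.mem_map] at hx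
      obtain ⟨k, _, rfl⟩ := hx; omega
    · exact Multiset.Nodup.map (fun a b => by omega) t.nodup
  · intro m hm
    simp only [Finset.mem_filter, Finset.mem_powerset] at hm ⊢
    obtain ⟨hmP, hnd⟩ := hm
    obtain ⟨hsum, hpos⟩ := mem_Pn.1 hmP
    constructor
    · intro x hx
      simp only [Multiset.mem_toFinset, Multiset.mem_map] at hx
      obtain ⟨k, hk, rfl⟩ := hx
      have hk1 := hpos k hk
      have hkn : k ≤ n := by rw [← hsum]; exact Multiset.le_sum_of_mem hk
      simp only [Finset.mem_range]
      rcases Nat.eq_or_lt_of_le hkn with h | h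
      · subst h
        -- k = n, k ≥ 1, so k - 1 < n
        omega
      · omega
    · have hdd : (Multiset.map (· - 1) m).toFinset.val = Multiset.map (· - 1) m :=
        Multiset.dedup_eq_self.2 (map_sub_one_nodup hnd hpos)
      rw [← wsum, hdd, map_add_sub m hpos, hsum]
  · intro t ht
    simp only [Finset.mem_filter, Finset.mem_powerset] at ht
    apply Finset.ext
    intro k
    simp only [Multiset.mem_toFinset, Multiset.mem_map]
    constructor
    · rintro ⟨x, ⟨y, hy, rfl⟩, rfl⟩; simpa using hy
    · intro hk; exact ⟨k + 1, ⟨k, hk, rfl⟩, by omega⟩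
  · intro m hm
    simp only [Finset.mem_filter, Finset.mem_powerset] at hm
    obtain ⟨hmP, hnd⟩ := hm
    obtain ⟨hsum, hpos⟩ := mem_Pn.1 hmP
    have hdd : (Multiset.map (· - 1) m).toFinset.val = Multiset.map (· - 1) m :=
      Multiset.dedup_eq_self.2 (map_sub_one_nodup hnd hpos)
    show Multiset.map (· + 1) ((Multiset.map (· - 1) m).toFinset.val) = m
    rw [hdd, map_add_sub m hpos]
  · intro t ht
    simp only [Finset.mem_filter, Finset.mem_powerset] at ht
    rw [Multiset.card_map]
    rfl

lemma splitting (F G : Multiset ℕ → ℂ) (n : ℕ) :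
    ∑ ij ∈ Finset.HasAntidiagonal.antidiagonal n, (∑ a ∈ Pn ij.1, F a) * (∑ b ∈ Pn ij.2, G b)
      = ∑ m ∈ Pn n, ∑ d ∈ m.powerset.toFinset, F (m - d) * G d := by
  have lhs : ∑ ij ∈ Finset.HasAntidiagonal.antidiagonal n, (∑ a ∈ Pn ij.1, F a) * (∑ b ∈ Pn ij.2, G b)
      = ∑ x ∈ (Finset.HasAntidiagonal.antidiagonal n).sigma (fun ij => Pn ij.1 ×ˢ Pn ij.2),
          F x.2.1 * G x.2.2 := by
    rw [Finset.sum_sigma]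
    refine Finset.sum_congr rfl fun ij _ => ?_
    rw [Finset.sum_mul_sum, Finset.sum_product]
  have rhs : ∑ m ∈ Pn n, ∑ d ∈ m.powerset.toFinset, F (m - d) * G d
      = ∑ y ∈ (Pn n).sigma (fun m => m.powerset.toFinset), F (y.1 - y.2) * G y.2 := by
    rw [Finset.sum_sigma]
  rw [lhs, rhs]
  apply Finset.sum_nbij' (i := fun x => (⟨x.2.1 + x.2.2, x.2.2⟩ : Σ _ : Multiset ℕ, Multiset ℕ))
    (j := fun y => (⟨(((y.1 : Multiset ℕ) - y.2).sum, (y.2 : Multiset ℕ).sum), (y.1 - y.2, y.2)⟩ :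
      Σ _ : ℕ × ℕ, Multiset ℕ × Multiset ℕ))
  · rintro ⟨⟨i, j⟩, a, b⟩ hx
    simp only [Finset.mem_sigma, Finset.HasAntidiagonal.mem_antidiagonal, Finset.mem_product] at hx
    obtain ⟨hij, ha, hb⟩ := hx
    obtain ⟨hsa, hpa⟩ := mem_Pn.1 ha
    obtain ⟨hsb, hpb⟩ := mem_Pn.1 hb
    simp only [Finset.mem_sigma, Multiset.mem_toFinset, Multiset.mem_powerset]
    exact ⟨mem_Pn.2 ⟨by rw [Multiset.sum_add, hsa, hsb, hij], fun x hx => by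
        rcases Multiset.mem_add.1 hx with h | h
        exacts [hpa x h, hpb x h]⟩,
      Multiset.le_add_left _ _⟩
  · rintro ⟨m, d⟩ hy
    simp only [Finset.mem_sigma, Multiset.mem_toFinset, Multiset.mem_powerset] at hy
    obtain ⟨hm, hd⟩ := hy
    obtain ⟨hsm, hpm⟩ := mem_Pn.1 hm
    simp only [Finset.mem_sigma, Finset.HasAntidiagonal.mem_antidiagonal, Finset.mem_product]
    have hsub : m - d + d = m := tsub_add_cancel_of_le hd
    refine ⟨by rw [← Multiset.sum_add, hsub, hsm], mem_Pn.2 ⟨rfl, fun x hx =>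
        hpm x (Multiset.mem_of_le (Multiset.sub_le_self m d) hx)⟩,
      mem_Pn.2 ⟨rfl, fun x hx => hpm x (Multiset.mem_of_le hd hx)⟩⟩
  · rintro ⟨⟨i, j⟩, a, b⟩ hx
    simp only [Finset.mem_sigma, Finset.HasAntidiagonal.mem_antidiagonal, Finset.mem_product] at hx
    obtain ⟨hij, ha, hb⟩ := hx
    have h1 : a + b - b = a := by simp
    simp only [h1, (mem_Pn.1 ha).1, (mem_Pn.1 hb).1]
  · rintro ⟨m, d⟩ hy
    simp only [Finset.mem_sigma, Multiset.mem_toFinset, Multiset.mem_powerset] at hy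
    simp only [tsub_add_cancel_of_le hy.2]
  · rintro ⟨⟨i, j⟩, a, b⟩ hx
    simp

lemma muP_val (A : Finset ℕ) : muP A.val = (-1 : ℂ) ^ A.card := by
  rw [muP, if_pos A.nodup]; rfl

lemma lgPart_val (A : Finset ℕ) : lgPart A.val = WithBot.unbotD 0 A.max := by
  rw [lgPart, Finset.val_toFinset]

lemma nodup_le_dedup {d m : Multiset ℕ} (hnd : d.Nodup) (h : d ≤ m) : d ≤ m.dedup := by
  rw [Multiset.le_iff_count]
  intro k
  rw [Multiset.count_dedup]
  by_cases hk : k ∈ m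
  · simp only [hk, if_pos]
    exact le_trans (Multiset.nodup_iff_count_le_one.1 hnd k) le_rfl
  · simp only [hk, if_neg, if_false]
    · by_contra hc
      push_neg at hc
      exact hk (Multiset.mem_of_le h (Multiset.count_pos.1 (by omega)))

lemma star (S : Set ℕ) (hS : 0 ∉ S) (m : Multiset ℕ) :
    ∑ d ∈ m.powerset.toFinset, (if lgPart (m - d) ∈ S then (1:ℂ) else 0) * muP d
      = if smPart m ∈ S then -muP m else 0 := by
  set f : Multiset ℕ → ℂ := fun d => (if lgPart (m - d) ∈ S then (1:ℂ) else 0) * muP d with hf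
  -- Step A: restrict to nodup submultisets, i.e. subsets of the support
  have hsub : m.dedup.powerset.toFinset ⊆ m.powerset.toFinset := by
    intro d hd
    simp only [Multiset.mem_toFinset, Multiset.mem_powerset] at hd ⊢
    exact le_trans hd (Multiset.dedup_le m)
  have hA : ∑ d ∈ m.powerset.toFinset, f d = ∑ d ∈ m.dedup.powerset.toFinset, f d := by
    refine (Finset.sum_subset hsub fun d hd hnd => ?_).symm
    simp only [Multiset.mem_toFinset, Multiset.mem_powerset] at hd hnd
    have : ¬ d.Nodup := fun h => hnd (nodup_le_dedup h hd)
    simp [hf, muP, this]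
  have hB : ∑ d ∈ m.dedup.powerset.toFinset, f d = ∑ A ∈ m.toFinset.powerset, f A.val := by
    apply Finset.sum_nbij' (i := fun d => d.toFinset) (j := fun A => A.val)
    · intro d hd
      simp only [Multiset.mem_toFinset, Multiset.mem_powerset] at hd
      simp only [Finset.mem_powerset]
      intro x hx
      rw [Multiset.mem_toFinset] at hx ⊢
      exact Multiset.mem_of_le (le_trans hd (Multiset.dedup_le m)) hx
    · intro A hA
      simp only [Finset.mem_powerset] at hA
      simp only [Multiset.mem_toFinset, Multiset.mem_powerset]
      calc A.val ≤ m.toFinset.val := Finset.val_le_iff.2 hA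
        _ = m.dedup := Multiset.toFinset_val m
    · intro d hd
      simp only [Multiset.mem_toFinset, Multiset.mem_powerset] at hd
      have hnd : d.Nodup := Multiset.nodup_of_le hd (Multiset.nodup_dedup m)
      rw [Multiset.toFinset_val d, Multiset.dedup_eq_self.2 hnd]
    · intro A _
      exact Finset.val_toFinset A
    · intro d hd
      have hnd : d.Nodup := Multiset.nodup_of_le (by
        simpa only [Multiset.mem_toFinset, Multiset.mem_powerset] using hd) (Multiset.nodup_dedup m)
      have : d.toFinset.val = d := by
        rw [Multiset.toFinset_val d, Multiset.dedup_eq_self.2 hnd]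
      rw [this]
  rw [hA, hB]
  set F := m.toFinset with hFdef
  by_cases hnd : m.Nodup
  · -- nodup case
    have hval : F.val = m := by rw [hFdef, Multiset.toFinset_val, Multiset.dedup_eq_self.2 hnd]
    have hcard : Multiset.card m = F.card := by rw [← hval]; rfl
    have hfA : ∀ A ∈ F.powerset, f A.val
        = (if lgPart ((F \ A).val) ∈ S then (1:ℂ) else 0) * (-1)^A.card := by
      intro A hA'
      rw [hf]
      simp only
      rw [muP_val, show m - A.val = (F \ A).val by rw [Finset.sdiff_val, hval]]
    rcases Finset.eq_empty_or_nonempty F with hFe | hFne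
    · have hm0 : m = 0 := by rw [← hval, hFe]; rfl
      rw [Finset.sum_congr rfl hfA, hFe]
      rw [show smPart m = 0 by rw [hm0]; simp [smPart]]
      rw [show muP m = 1 by rw [hm0]; simp [muP]]
      simp [lgPart_val, hS, show lgPart 0 = 0 by simp [lgPart]]
    · set a := F.min' hFne with ha
      have haF : a ∈ F := F.min'_mem hFne
      have haF' : a ∉ F.erase a := Finset.notMem_erase a F
      have hsm : smPart m = a := by
        rw [smPart, ← hFdef, ← Finset.coe_min' hFne, ← ha]
        rfl
      have hFins : F = insert a (F.erase a) := (Finset.insert_erase haF).symm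
      set F' := F.erase a with hF'
      have hcard' : F.card = F'.card + 1 := by
        rw [hF', Finset.card_erase_of_mem haF]
        have : 1 ≤ F.card := Finset.card_pos.2 hFne
        omega
      rw [Finset.sum_congr rfl hfA]
      rw [show F.powerset = (insert a F').powerset by rw [← hFins]]
      rw [Finset.sum_powerset_insert haF']
      rw [← Finset.sum_add_distrib]
      have key : ∀ A ∈ F'.powerset,
          ((if lgPart ((F \ A).val) ∈ S then (1:ℂ) else 0) * (-1)^A.card
            + (if lgPart ((F \ insert a A).val) ∈ S then (1:ℂ) else 0) * (-1)^(insert a A).card)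
          = if A = F' then (if a ∈ S then (-1:ℂ)^F'.card else 0) else 0 := by
        intro A hA'
        rw [Finset.mem_powerset] at hA'
        have haA : a ∉ A := fun h => haF' (hA' h)
        have hcins : (insert a A).card = A.card + 1 := Finset.card_insert_of_notMem haA
        by_cases hAF : A = F'
        · have h1 : F \ A = {a} := by
            rw [hAF, hF']
            ext x
            simp only [Finset.mem_sdiff, Finset.mem_erase, Finset.mem_singleton]
            constructor
            · rintro ⟨hx, h⟩
              by_contra hxa
              exact h ⟨hxa, hx⟩
            · rintro rfl
              exact ⟨haF, fun h => h.1 rfl⟩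
          have h2 : F \ insert a A = ∅ := by
            rw [hAF, Finset.sdiff_eq_empty_iff_subset, ← hFins]
          rw [h1, h2, hcins, hAF]
          have hlga : lgPart ({a} : Finset ℕ).val = a := by
            rw [lgPart_val, Finset.max_singleton]; rfl
          have hlg0 : lgPart (∅ : Finset ℕ).val = 0 := by
            rw [lgPart_val]; rfl
          rw [hlga, hlg0, if_neg hS, if_pos rfl, zero_mul, add_zero]
          split <;> ring
        · have hBne : (F' \ A).Nonempty := by
            rw [Finset.sdiff_nonempty]
            intro hc
            exact hAF (Finset.Subset.antisymm hA' hc)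
          set B := F' \ A with hB
          have h1 : F \ A = insert a B := by
            conv_lhs => rw [hFins]
            exact Finset.insert_sdiff_of_notMem _ haA
          have h2 : F \ insert a A = B := by
            ext x
            simp only [Finset.mem_sdiff, hB, hFins, Finset.mem_insert, not_or]
            constructor
            · rintro ⟨h | h, hxa, hxA⟩
              · exact absurd h hxa
              · exact ⟨h, hxA⟩
            · rintro ⟨hx, hxA⟩
              refine ⟨Or.inr hx, fun hc => haF' (hc ▸ hx), hxA⟩
          set b := B.max' hBne with hb
          have hbF : b ∈ F := (Finset.erase_subset a F) (Finset.sdiff_subset (B.max'_mem hBne))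
          have hab : a ≤ b := Finset.min'_le F b hbF
          have hmaxB : B.max = (b : WithBot ℕ) := (Finset.coe_max' hBne).symm
          have h3 : (insert a B).max = (b : WithBot ℕ) := by
            rw [Finset.max_insert, hmaxB]
            simp only [max_eq_right_iff]
            exact WithBot.coe_le_coe.2 hab
          rw [h1, h2, hcins, if_neg hAF]
          rw [lgPart_val, lgPart_val, h3, hmaxB]
          split <;> ring
      rw [Finset.sum_congr rfl key, Finset.sum_ite_eq' _ F' _,
        if_pos (Finset.mem_powerset_self F')]
      rw [hsm, muP, if_pos hnd, hcard, hcard']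
      split <;> [skip; rfl]
      ring
  · -- non-nodup case
    obtain ⟨r, hr⟩ : ∃ r, ¬ Multiset.count r m ≤ 1 := by
      by_contra hc
      push_neg at hc
      exact hnd (Multiset.nodup_iff_count_le_one.2 fun a => by have := hc a; omega)
    have hrm : r ∈ m := Multiset.count_pos.1 (by omega)
    have hrF : r ∈ F := Multiset.mem_toFinset.2 hrm
    have hRHS : (if smPart m ∈ S then -muP m else 0) = 0 := by
      simp [muP, hnd]
    rw [hRHS]
    conv_lhs => rw [show F = insert r (F.erase r) from (Finset.insert_erase hrF).symm]
    rw [Finset.sum_powerset_insert (Finset.notMem_erase r F), ← Finset.sum_add_distrib]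
    apply Finset.sum_eq_zero
    intro A hA'
    rw [Finset.mem_powerset] at hA'
    have hrA : r ∉ A := fun h => (Finset.notMem_erase r F) (hA' h)
    have hins : (insert r A).val = r ::ₘ A.val := Finset.insert_val_of_notMem hrA
    have hlg : lgPart (m - A.val) = lgPart (m - (r ::ₘ A.val)) := by
      rw [lgPart, lgPart]
      congr 1
      congr 1
      apply Finset.ext
      intro x
      simp only [Multiset.mem_toFinset]
      rw [← Multiset.count_pos, ← Multiset.count_pos, Multiset.count_sub, Multiset.count_sub]
      by_cases hxr : x = r
      · subst hxr
        rw [Multiset.count_cons_self]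
        have : Multiset.count x A.val = 0 := by
          rw [Multiset.count_eq_zero]
          exact fun h => hrA (by exact_mod_cast h)
        omega
      · rw [Multiset.count_cons_of_ne hxr]
    have hndA : (r ::ₘ A.val).Nodup := Multiset.nodup_cons.2 ⟨fun h => hrA (by exact_mod_cast h), A.nodup⟩
    rw [hf]
    simp only
    rw [muP_val, hins, muP, if_pos hndA, Multiset.card_cons, ← hlg]
    rw [show Multiset.card A.val = A.card from rfl]
    split <;> ring


/-- Largest-part/smallest-part duality:
`∑_{sm(λ)∈S} μ*_P(λ) q^{|λ|} = (∑_{lg(λ)∈S} q^{|λ|}) ⋅ (q;q)_∞`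
as formal power series. -/
theorem largest_smallest_duality (S : Set ℕ) (hS : 0 ∉ S) :
    psOn (fun l => smPart l ∈ S) (fun l => -muP l) =
      psOn (fun l => lgPart l ∈ S) (fun _ => 1) * qPochInf := by
  ext n
  rw [PowerSeries.coeff_mul]
  have hL : coeff n (psOn (fun l => smPart l ∈ S) (fun l => -muP l))
      = ∑ m ∈ Pn n, (if smPart m ∈ S then -muP m else 0) := by
    rw [psOn, coeff_mk]
    exact sum_partition n (fun m => if smPart m ∈ S then -muP m else 0)
  have hR1 : ∀ i : ℕ, coeff i (psOn (fun l => lgPart l ∈ S) (fun _ => (1:ℂ)))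
      = ∑ a ∈ Pn i, (if lgPart a ∈ S then (1:ℂ) else 0) := by
    intro i; rw [psOn, coeff_mk]
    exact sum_partition i (fun m => if lgPart m ∈ S then (1:ℂ) else 0)
  have hR2 : ∀ j : ℕ, coeff j qPochInf = ∑ b ∈ Pn j, muP b := by
    intro j; rw [qPochInf, coeff_mk, coeff_qPochFin, distinct_sum]
  rw [hL, Finset.sum_congr rfl (fun ij _ => by rw [hR1, hR2] :
    ∀ ij ∈ Finset.HasAntidiagonal.antidiagonal n,
      coeff ij.1 (psOn (fun l => lgPart l ∈ S) (fun _ => (1:ℂ))) * coeff ij.2 qPochInf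
        = (∑ a ∈ Pn ij.1, (if lgPart a ∈ S then (1:ℂ) else 0)) * (∑ b ∈ Pn ij.2, muP b))]
  rw [splitting (fun x => if lgPart x ∈ S then (1:ℂ) else 0) muP n]
  exact (Finset.sum_congr rfl fun m _ => star S hS m).symm
end

section
/- Smallest-part Möbius convolution formula: for a function a on partitions with a(∅)=1 and each n ≥ 1, as formal power series in q, ∑_{λ: sm(λ)=n} (μ_P * a)(λ) q^{|λ|} = Ã_n(q) · q^n (q^{n+1};q)_∞, where Ã_n(q) := a((n)) - 1 + ∑_{γ: sm(γ) ≥ n} [a(γ·(n)) - a(γ)] q^{|γ|}, (n) is the single-part partition of n, and γ·(n) is γ with a part n adjoined. -/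
open Finset PowerSeries
open scoped Classical

/-- `Ã_n(q) := a((n)) - 1 + ∑_{γ≠∅, sm(γ) ≥ n} [a(γ·(n)) - a(γ)] q^{|γ|}`. -/
noncomputable def Atilde (a : Multiset ℕ → ℂ) (n : ℕ) : PowerSeries ℂ :=
  PowerSeries.C (a {n} - 1) +
    psOn (fun l => l ≠ 0 ∧ n ≤ smPart l) (fun l => a (n ::ₘ l) - a l)

namespace SPMC

/-- Partitions of `N` as a finset of multisets. -/
noncomputable def Pf (N : ℕ) : Finset (Multiset ℕ) :=
  Finset.univ.image (fun p : Nat.Partition N => p.parts)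

lemma mem_Pf {N : ℕ} {l : Multiset ℕ} :
    l ∈ Pf N ↔ l.sum = N ∧ ∀ x ∈ l, 0 < x := by
  constructor
  · intro h
    simp only [Pf, Finset.mem_image] at h
    obtain ⟨p, -, rfl⟩ := h
    exact ⟨p.parts_sum, fun x hx => p.parts_pos hx⟩
  · rintro ⟨h1, h2⟩
    simp only [Pf, Finset.mem_image]
    exact ⟨⟨l, fun hi => h2 _ hi, h1⟩, Finset.mem_univ _, rfl⟩

lemma coeff_psOn (P : Multiset ℕ → Prop) (f : Multiset ℕ → ℂ) (N : ℕ) :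
    (PowerSeries.coeff N) (psOn P f) = ∑ l ∈ Pf N, if P l then f l else 0 := by
  rw [psOn, coeff_mk, Pf, Finset.sum_image (fun p _ q _ h => Nat.Partition.ext h)]

lemma coeff_psOn' (P : Multiset ℕ → Prop) (f : Multiset ℕ → ℂ) (N : ℕ) :
    (PowerSeries.coeff N) (psOn P f) = ∑ l ∈ (Pf N).filter P, f l := by
  rw [coeff_psOn, Finset.sum_filter]

/-- All parts at least `n`. -/
def Pge (n : ℕ) (l : Multiset ℕ) : Prop := ∀ x ∈ l, n ≤ x

lemma mem_le_sum {l : Multiset ℕ} {x : ℕ} (hx : x ∈ l) : x ≤ l.sum := by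
  obtain ⟨t, rfl⟩ := Multiset.exists_cons_of_mem hx
  simp

lemma smPart_zero : smPart 0 = 0 := by simp [smPart]

lemma smPart_eq_min' {l : Multiset ℕ} (h : l ≠ 0) :
    smPart l = l.toFinset.min' (Multiset.toFinset_nonempty.2 h) := by
  have := Finset.coe_min' (Multiset.toFinset_nonempty.2 h)
  rw [smPart, ← this]
  rfl

lemma smPart_mem {l : Multiset ℕ} (h : l ≠ 0) : smPart l ∈ l := by
  rw [smPart_eq_min' h]
  have := Finset.min'_mem l.toFinset (Multiset.toFinset_nonempty.2 h)
  simpa using this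

lemma smPart_le {l : Multiset ℕ} {x : ℕ} (hx : x ∈ l) : smPart l ≤ x := by
  have h : l ≠ 0 := by rintro rfl; simp at hx
  rw [smPart_eq_min' h]
  exact Finset.min'_le _ _ (by simpa using hx)

lemma smPart_eq_iff {l : Multiset ℕ} {n : ℕ} (hn : 1 ≤ n) :
    smPart l = n ↔ Pge n l ∧ ¬ Pge (n + 1) l := by
  constructor
  · intro h
    have hl : l ≠ 0 := by rintro rfl; rw [smPart_zero] at h; omega
    refine ⟨fun x hx => h ▸ smPart_le hx, fun hc => ?_⟩
    have := hc _ (smPart_mem hl)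
    omega
  · rintro ⟨h1, h2⟩
    simp only [Pge, not_forall] at h2
    obtain ⟨x, hx, hx2⟩ := h2
    have hxn : x = n := by have := h1 x hx; omega
    subst hxn
    have hl : l ≠ 0 := by rintro rfl; simp at hx
    exact le_antisymm (smPart_le hx) (h1 _ (smPart_mem hl))

lemma le_smPart_iff {l : Multiset ℕ} (h : l ≠ 0) {n : ℕ} :
    n ≤ smPart l ↔ Pge n l :=
  ⟨fun hle x hx => hle.trans (smPart_le hx), fun hp => hp _ (smPart_mem h)⟩

/-- L2: multiplicativity of partition convolution on `parts ≥ m` sets. -/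
lemma psOn_pconv (a b : Multiset ℕ → ℂ) (m : ℕ) (hm : 1 ≤ m) :
    psOn (Pge m) (pconv a b) = psOn (Pge m) a * psOn (Pge m) b := by
  ext N
  rw [PowerSeries.coeff_mul, coeff_psOn']
  simp only [coeff_psOn']
  have hR : ∀ ij ∈ Finset.HasAntidiagonal.antidiagonal N,
      (∑ d ∈ (Pf ij.1).filter (Pge m), a d) * (∑ g ∈ (Pf ij.2).filter (Pge m), b g)
      = ∑ p ∈ ((Pf ij.1).filter (Pge m)) ×ˢ ((Pf ij.2).filter (Pge m)), a p.1 * b p.2 := by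
    intro ij _
    rw [Finset.sum_mul_sum, Finset.sum_product]
  have hS := Finset.sum_sigma (Finset.HasAntidiagonal.antidiagonal N)
    (fun ij => ((Pf ij.1).filter (Pge m)) ×ˢ ((Pf ij.2).filter (Pge m)))
    (fun x => a x.2.1 * b x.2.2)
  have hL := Finset.sum_sigma ((Pf N).filter (Pge m))
    (fun l => l.powerset.toFinset) (fun x => a x.2 * b (x.1 - x.2))
  rw [Finset.sum_congr rfl hR, ← hS]
  simp only [pconv]
  rw [← hL]
  refine Finset.sum_nbij' (i := fun x => ⟨(x.2.sum, (x.1 - x.2).sum), (x.2, x.1 - x.2)⟩)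
    (j := fun y => ⟨y.2.1 + y.2.2, y.2.1⟩) ?_ ?_ ?_ ?_ ?_
  · rintro ⟨l, d⟩ hx
    simp only [Finset.mem_sigma, Finset.mem_filter, Multiset.mem_toFinset,
      Multiset.mem_powerset] at hx
    obtain ⟨⟨hlPf, hlge⟩, hdl⟩ := hx
    rw [mem_Pf] at hlPf
    have hsum : d.sum + (l - d).sum = N := by
      rw [← Multiset.sum_add]
      rw [show d + (l - d) = l from add_tsub_cancel_of_le hdl]
      exact hlPf.1
    simp only [Finset.mem_sigma, Finset.HasAntidiagonal.mem_antidiagonal, Finset.mem_product,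
      Finset.mem_filter, mem_Pf]
    refine ⟨hsum, ⟨⟨trivial, ?_⟩, ?_⟩, ⟨trivial, ?_⟩, ?_⟩
    · exact fun x hx => hlPf.2 x (Multiset.mem_of_le hdl hx)
    · exact fun x hx => hlge x (Multiset.mem_of_le hdl hx)
    · exact fun x hx => hlPf.2 x (Multiset.mem_of_le (tsub_le_self) hx)
    · exact fun x hx => hlge x (Multiset.mem_of_le (tsub_le_self) hx)
  · rintro ⟨⟨i, j⟩, d, g⟩ hy
    simp only [Finset.mem_sigma, Finset.HasAntidiagonal.mem_antidiagonal, Finset.mem_product,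
      Finset.mem_filter, mem_Pf] at hy
    obtain ⟨hij, ⟨⟨hdsum, hdpos⟩, hdge⟩, ⟨hgsum, hgpos⟩, hgge⟩ := hy
    simp only [Finset.mem_sigma, Finset.mem_filter, Multiset.mem_toFinset,
      Multiset.mem_powerset, mem_Pf]
    refine ⟨⟨⟨?_, ?_⟩, ?_⟩, ?_⟩
    · rw [Multiset.sum_add, hdsum, hgsum, hij]
    · intro x hx
      rcases Multiset.mem_add.1 hx with h | h
      · exact hdpos x h
      · exact hgpos x h
    · intro x hx
      rcases Multiset.mem_add.1 hx with h | h
      · exact hdge x h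
      · exact hgge x h
    · exact Multiset.le_add_right _ _
  · rintro ⟨l, d⟩ hx
    simp only [Finset.mem_sigma, Finset.mem_filter, Multiset.mem_toFinset,
      Multiset.mem_powerset] at hx
    have : d + (l - d) = l := add_tsub_cancel_of_le hx.2
    simp only [this]
  · rintro ⟨⟨i, j⟩, d, g⟩ hy
    simp only [Finset.mem_sigma, Finset.HasAntidiagonal.mem_antidiagonal, Finset.mem_product,
      Finset.mem_filter, mem_Pf] at hy
    obtain ⟨hij, ⟨⟨hdsum, _⟩, _⟩, ⟨hgsum, _⟩, _⟩ := hy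
    have h1 : d + g - d = g := add_tsub_cancel_left d g
    simp only [h1, hdsum, hgsum]
  · rintro ⟨l, d⟩ _
    rfl

/-- Expansion of a finite product `∏ (1 - X^k)`. -/
lemma coeff_prod_one_sub (s : Finset ℕ) (N : ℕ) :
    PowerSeries.coeff N (∏ k ∈ s, (1 - (PowerSeries.X : PowerSeries ℂ) ^ k)) =
      ∑ t ∈ s.powerset, if (∑ i ∈ t, i) = N then (-1 : ℂ) ^ t.card else 0 := by
  have h1 : ∀ k ∈ s, (1 - (PowerSeries.X : PowerSeries ℂ) ^ k)
      = (-(PowerSeries.X : PowerSeries ℂ) ^ k) + 1 := by intro k _; ring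
  rw [Finset.prod_congr rfl h1, Finset.prod_add]
  rw [map_sum]
  refine Finset.sum_congr rfl fun t ht => ?_
  have h2 : (∏ i ∈ t, (-(PowerSeries.X : PowerSeries ℂ) ^ i)) * ∏ i ∈ s \ t, (1 : PowerSeries ℂ)
      = PowerSeries.C ((-1 : ℂ) ^ t.card) * (PowerSeries.X : PowerSeries ℂ) ^ (∑ i ∈ t, i) := by
    rw [Finset.prod_const_one, mul_one]
    rw [show (fun i => -(PowerSeries.X : PowerSeries ℂ) ^ i) = fun i =>
      (-1 : PowerSeries ℂ) * (PowerSeries.X : PowerSeries ℂ) ^ i from by funext i; ring]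
    rw [Finset.prod_mul_distrib, Finset.prod_const, Finset.prod_pow_eq_pow_sum]
    congr 1
    simp [map_pow]
  rw [h2, PowerSeries.coeff_C_mul, PowerSeries.coeff_X_pow]
  by_cases h : (∑ i ∈ t, i) = N <;> simp [h, Ne.symm]

set_option maxHeartbeats 1000000 in

set_option maxHeartbeats 2000000 in
lemma psOn_muP (m : ℕ) : psOn (Pge (m + 1)) muP = qPochInfFrom m := by
  ext N
  rw [coeff_psOn, qPochInfFrom, PowerSeries.coeff_mk, coeff_prod_one_sub]
  have hL : ∀ l ∈ Pf N, (if Pge (m+1) l then muP l else 0)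
      = if (Pge (m+1) l ∧ l.Nodup) then (-1:ℂ)^(Multiset.card l) else 0 := by
    intro l _
    simp only [muP]
    split_ifs with h1 h2 h3 <;> tauto
  rw [Finset.sum_congr rfl hL]
  rw [← Finset.sum_filter (fun l => Pge (m+1) l ∧ l.Nodup)
    (fun l => (-1:ℂ)^(Multiset.card l))]
  rw [← Finset.sum_filter (fun t => (∑ i ∈ t, i) = N) (fun t => (-1:ℂ)^t.card)]
  have hsum_val : ∀ t : Finset ℕ, (∑ i ∈ t, i) = t.val.sum := by
    intro t; rw [Finset.sum_eq_multiset_sum, Multiset.map_id']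
  refine Finset.sum_nbij' (i := fun l => l.toFinset) (j := fun t => t.val) ?_ ?_ ?_ ?_ ?_
  · intro l hl
    simp only [Finset.mem_filter] at hl
    obtain ⟨hPf, hge, hnd⟩ := hl
    obtain ⟨hsum, hpos⟩ := mem_Pf.1 hPf
    simp only [Finset.mem_filter, Finset.mem_powerset]
    have hval : l.toFinset.val = l := by
      rw [Multiset.toFinset_val, Multiset.dedup_eq_self.2 hnd]
    constructor
    · intro x hx
      rw [Multiset.mem_toFinset] at hx
      rw [Finset.mem_Icc]
      exact ⟨hge x hx, hsum ▸ mem_le_sum hx⟩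
    · rw [hsum_val, hval, hsum]
  · intro t ht
    simp only [Finset.mem_filter, Finset.mem_powerset] at ht
    obtain ⟨hsub, hsum⟩ := ht
    simp only [Finset.mem_filter, mem_Pf]
    have hmem : ∀ x ∈ t.val, x ∈ Finset.Icc (m+1) N := fun x hx => hsub hx
    refine ⟨⟨?_, ?_⟩, ?_, t.nodup⟩
    · rw [← hsum_val, hsum]
    · intro x hx
      have := (Finset.mem_Icc.1 (hmem x hx)).1; omega
    · intro x hx
      have := (Finset.mem_Icc.1 (hmem x hx)).1; omega
  · intro l hl
    simp only [Finset.mem_filter] at hl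
    show l.toFinset.val = l
    rw [Multiset.toFinset_val, Multiset.dedup_eq_self.2 hl.2.2]
  · intro t _
    exact Finset.val_toFinset t
  · intro l hl
    simp only [Finset.mem_filter] at hl
    have hval : l.toFinset.val = l := by
      rw [Multiset.toFinset_val, Multiset.dedup_eq_self.2 hl.2.2]
    show ((-1:ℂ))^(Multiset.card l) = (-1:ℂ)^(l.toFinset.card)
    rw [Finset.card_def, hval]

/-- In degrees `N < n`, the filters for `Pge n` and `Pge (n+1)` agree. -/
lemma filter_Pge_eq {N n : ℕ} (h : N < n) :
    (Pf N).filter (Pge n) = (Pf N).filter (Pge (n + 1)) := by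
  apply Finset.filter_congr
  intro l hl
  obtain ⟨hsum, hpos⟩ := mem_Pf.1 hl
  constructor <;> intro hp <;> intro x hx <;>
    [skip; skip] <;>
    · exfalso
      have h1 := hp x hx
      have h2 := mem_le_sum hx
      omega

set_option maxHeartbeats 2000000 in
/-- L4: shift identity. -/
lemma psOn_shift (a : Multiset ℕ → ℂ) (n : ℕ) (hn : 1 ≤ n) :
    psOn (Pge n) a = psOn (Pge (n + 1)) a
      + PowerSeries.X ^ n * psOn (Pge n) (fun g => a (n ::ₘ g)) := by
  ext N
  rw [map_add, coeff_psOn', coeff_psOn', PowerSeries.coeff_X_pow_mul']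
  by_cases hnN : n ≤ N
  · rw [if_pos hnN, coeff_psOn']
    rw [← Finset.sum_filter_add_sum_filter_not ((Pf N).filter (Pge n)) (fun l => n ∈ l)]
    rw [add_comm]
    congr 1
    · -- not-containing part equals Pge (n+1) part
      rw [Finset.filter_filter]
      apply Finset.sum_congr _ (fun _ _ => rfl)
      apply Finset.filter_congr
      intro l hl
      constructor
      · rintro ⟨hp, hnl⟩ x hx
        have := hp x hx
        rcases Nat.lt_or_ge n x with h | h
        · omega
        · have hxn : x = n := by omega
          exact absurd (hxn ▸ hx) hnl
      · intro hp
        refine ⟨fun x hx => by have := hp x hx; omega, fun hnl => by have := hp n hnl; omega⟩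
    · -- containing part: bijection with Pf (N - n)
      refine Finset.sum_nbij' (i := fun l => l.erase n) (j := fun g => n ::ₘ g) ?_ ?_ ?_ ?_ ?_
      · intro l hl
        simp only [Finset.mem_filter, mem_Pf] at hl ⊢
        obtain ⟨⟨⟨hsum, hpos⟩, hge⟩, hnl⟩ := hl
        have hc : n ::ₘ l.erase n = l := Multiset.cons_erase hnl
        have hes : (l.erase n).sum = N - n := by
          have : l.sum = n + (l.erase n).sum := by rw [← Multiset.sum_cons, hc]
          omega
        exact ⟨⟨hes, fun x hx => hpos x (Multiset.mem_of_mem_erase hx)⟩,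
          fun x hx => hge x (Multiset.mem_of_mem_erase hx)⟩
      · intro g hg
        simp only [Finset.mem_filter, mem_Pf] at hg ⊢
        obtain ⟨⟨hsum, hpos⟩, hge⟩ := hg
        refine ⟨⟨⟨?_, ?_⟩, ?_⟩, ?_⟩
        · rw [Multiset.sum_cons, hsum]; omega
        · intro x hx
          rcases Multiset.mem_cons.1 hx with h | h
          · omega
          · exact hpos x h
        · intro x hx
          rcases Multiset.mem_cons.1 hx with h | h
          · omega
          · exact hge x h
        · exact Multiset.mem_cons_self n g
      · intro l hl
        simp only [Finset.mem_filter] at hl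
        exact Multiset.cons_erase hl.2
      · intro g _
        exact Multiset.erase_cons_head n g
      · intro l hl
        simp only [Finset.mem_filter] at hl
        show a l = a (n ::ₘ l.erase n)
        rw [Multiset.cons_erase hl.2]
  · rw [if_neg hnN, add_zero]
    rw [filter_Pge_eq (by omega)]

/-- L1: split by smallest part. -/
lemma psOn_smPart (F : Multiset ℕ → ℂ) (n : ℕ) (hn : 1 ≤ n) :
    psOn (fun l => smPart l = n) F = psOn (Pge n) F - psOn (Pge (n + 1)) F := by
  ext N
  rw [map_sub, coeff_psOn, coeff_psOn, coeff_psOn, ← Finset.sum_sub_distrib]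
  refine Finset.sum_congr rfl fun l _ => ?_
  by_cases h1 : Pge (n + 1) l
  · have h2 : Pge n l := fun x hx => by have := h1 x hx; omega
    rw [if_pos h2, if_pos h1, if_neg, sub_self]
    rw [smPart_eq_iff hn]; tauto
  · by_cases h2 : Pge n l
    · rw [if_pos ((smPart_eq_iff hn).2 ⟨h2, h1⟩), if_pos h2, if_neg h1, sub_zero]
    · rw [if_neg, if_neg h2, if_neg h1, sub_zero]
      rw [smPart_eq_iff hn]; tauto

lemma Pf_zero : Pf 0 = {0} := by
  ext l
  rw [mem_Pf, Finset.mem_singleton]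
  constructor
  · rintro ⟨hsum, hpos⟩
    rw [Multiset.sum_eq_zero_iff] at hsum
    exact Multiset.eq_zero_of_forall_notMem fun x hx => by have := hpos x hx; have := hsum x hx; omega
  · rintro rfl; simp

/-- L5: Atilde in terms of psOn over `Pge n`. -/
lemma Atilde_eq (a : Multiset ℕ → ℂ) (ha : a 0 = 1) (n : ℕ) (hn : 1 ≤ n) :
    Atilde a n = psOn (Pge n) (fun g => a (n ::ₘ g)) - psOn (Pge n) a := by
  ext N
  rw [Atilde, map_add, PowerSeries.coeff_C, map_sub, coeff_psOn, coeff_psOn, coeff_psOn,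
    ← Finset.sum_sub_distrib]
  rcases Nat.eq_zero_or_pos N with rfl | hN
  · rw [Pf_zero, Finset.sum_singleton, Finset.sum_singleton, if_pos rfl]
    have h0 : ¬ ((0 : Multiset ℕ) ≠ 0 ∧ n ≤ smPart 0) := by simp
    rw [if_neg h0]
    have hp : Pge n 0 := fun x hx => absurd hx (Multiset.notMem_zero x)
    rw [if_pos hp, if_pos hp]
    show a {n} - 1 + 0 = a (n ::ₘ 0) - a 0
    rw [ha]
    have : (n ::ₘ (0 : Multiset ℕ)) = {n} := rfl
    rw [this, add_zero]
  · rw [if_neg (by omega), zero_add]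
    refine Finset.sum_congr rfl fun l hl => ?_
    have hl0 : l ≠ 0 := by
      rintro rfl
      have := (mem_Pf.1 hl).1
      simp at this
      omega
    have : (l ≠ 0 ∧ n ≤ smPart l) ↔ Pge n l := by
      rw [le_smPart_iff hl0]; tauto
    by_cases h : Pge n l
    · rw [if_pos (this.2 h), if_pos h, if_pos h]
    · rw [if_neg (fun hc => h (this.1 hc)), if_neg h, if_neg h, sub_zero]

/-- Stabilization of the truncated products. -/
lemma coeff_prod_stab (c N M : ℕ) (h : N ≤ M) :
    PowerSeries.coeff N (∏ k ∈ Finset.Icc c M, (1 - (PowerSeries.X : PowerSeries ℂ) ^ k)) =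
    PowerSeries.coeff N (∏ k ∈ Finset.Icc c N, (1 - (PowerSeries.X : PowerSeries ℂ) ^ k)) := by
  induction M with
  | zero => have : N = 0 := by omega
            subst this; rfl
  | succ M ih =>
    rcases Nat.lt_or_ge N (M + 1) with hlt | hge
    · have hNM := ih (by omega)
      by_cases hc : c ≤ M + 1
      · have hins : Finset.Icc c (M + 1) = insert (M + 1) (Finset.Icc c M) := by
          ext x; simp only [Finset.mem_Icc, Finset.mem_insert]; omega
        rw [hins, Finset.prod_insert (by simp [Finset.mem_Icc])]
        have expand : (1 - (PowerSeries.X : PowerSeries ℂ) ^ (M + 1)) *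
            (∏ k ∈ Finset.Icc c M, (1 - (PowerSeries.X : PowerSeries ℂ) ^ k))
            = (∏ k ∈ Finset.Icc c M, (1 - (PowerSeries.X : PowerSeries ℂ) ^ k))
              - (PowerSeries.X : PowerSeries ℂ) ^ (M + 1) *
                (∏ k ∈ Finset.Icc c M, (1 - (PowerSeries.X : PowerSeries ℂ) ^ k)) := by ring
        rw [expand, map_sub, PowerSeries.coeff_X_pow_mul', if_neg (by omega), sub_zero, hNM]
      · have he : Finset.Icc c (M + 1) = Finset.Icc c M := by
          ext x; simp only [Finset.mem_Icc]; omega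
        rw [he, hNM]
    · have : N = M + 1 := by omega
      subst this; rfl

/-- L6: one-step factorization of the Pochhammer product. -/
lemma qPochInfFrom_succ (m : ℕ) :
    qPochInfFrom m = (1 - (PowerSeries.X : PowerSeries ℂ) ^ (m + 1)) * qPochInfFrom (m + 1) := by
  ext N
  rw [qPochInfFrom, PowerSeries.coeff_mk]
  have expand : (1 - (PowerSeries.X : PowerSeries ℂ) ^ (m + 1)) * qPochInfFrom (m + 1)
      = qPochInfFrom (m + 1) - (PowerSeries.X : PowerSeries ℂ) ^ (m + 1) * qPochInfFrom (m + 1) := by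
    ring
  rw [expand, map_sub, PowerSeries.coeff_X_pow_mul']
  rw [show qPochInfFrom (m+1) = PowerSeries.mk fun k =>
    PowerSeries.coeff k (∏ j ∈ Finset.Icc (m + 2) k, (1 - (PowerSeries.X : PowerSeries ℂ) ^ j))
    from rfl]
  rw [PowerSeries.coeff_mk]
  by_cases h : m + 1 ≤ N
  · rw [if_pos h, PowerSeries.coeff_mk]
    rw [← coeff_prod_stab (m + 2) (N - (m + 1)) N (by omega)]
    have hins : Finset.Icc (m + 1) N = insert (m + 1) (Finset.Icc (m + 2) N) := by
      ext x; simp only [Finset.mem_Icc, Finset.mem_insert]; omega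
    rw [hins, Finset.prod_insert (by simp [Finset.mem_Icc])]
    have expand2 : (1 - (PowerSeries.X : PowerSeries ℂ) ^ (m + 1)) *
        (∏ k ∈ Finset.Icc (m + 2) N, (1 - (PowerSeries.X : PowerSeries ℂ) ^ k))
        = (∏ k ∈ Finset.Icc (m + 2) N, (1 - (PowerSeries.X : PowerSeries ℂ) ^ k))
          - (PowerSeries.X : PowerSeries ℂ) ^ (m + 1) *
            (∏ k ∈ Finset.Icc (m + 2) N, (1 - (PowerSeries.X : PowerSeries ℂ) ^ k)) := by ring
    rw [expand2, map_sub, PowerSeries.coeff_X_pow_mul', if_pos h]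
  · rw [if_neg h, sub_zero]
    have h1 : Finset.Icc (m + 1) N = (∅ : Finset ℕ) := by
      ext x; simp only [Finset.mem_Icc, Finset.notMem_empty, iff_false]; omega
    have h2 : Finset.Icc (m + 2) N = (∅ : Finset ℕ) := by
      ext x; simp only [Finset.mem_Icc, Finset.notMem_empty, iff_false]; omega
    rw [h1, h2]

end SPMC

/-- Smallest-part Möbius convolution formula: for `a(∅)=1` and `n ≥ 1`,
`∑_{sm(λ)=n} (μ_P * a)(λ) q^{|λ|} = Ã_n(q) ⋅ q^n (q^{n+1};q)_∞`
as formal power series. -/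
theorem smallest_part_moebius_convolution (a : Multiset ℕ → ℂ)
    (ha : a 0 = 1) (n : ℕ) (hn : 1 ≤ n) :
    psOn (fun l => smPart l = n) (pconv muP a) =
      Atilde a n * (PowerSeries.X ^ n * qPochInfFrom n) := by
  obtain ⟨m, rfl⟩ : ∃ m, n = m + 1 := ⟨n - 1, by omega⟩
  rw [SPMC.psOn_smPart (pconv muP a) (m + 1) (by omega),
    SPMC.psOn_pconv muP a (m + 1) (by omega),
    SPMC.psOn_pconv muP a (m + 2) (by omega),
    SPMC.psOn_muP m, SPMC.psOn_muP (m + 1),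
    SPMC.Atilde_eq a ha (m + 1) (by omega),
    SPMC.psOn_shift a (m + 1) (by omega),
    SPMC.qPochInfFrom_succ m]
  ring
end

section
/- Size convolution identity: for the partition size function sz(λ) = |λ| and any S ⊆ ℕ, as formal power series in q, ∑_{λ: sm(λ)∈S} (μ_P * sz)(λ) q^{|λ|} = ∑_{n∈S} n q^n/(1-q^n). In particular, taking S = ℕ, ∑_{λ≠∅} (μ_P * sz)(λ) q^{|λ|} = ∑_{n≥1} σ₁(n) q^n where σ₁(n) = ∑_{d|n} d. -/
open Finset PowerSeries
open scoped Classical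

lemma smPart_of_toFinset_eq {l : Multiset ℕ} {a : ℕ} (h : l.toFinset = {a}) :
    smPart l = a := by
  simp only [smPart, h, Finset.min_singleton]
  rfl

lemma neg_one_pow_powerset_sum (x : Finset ℕ) :
    (∑ m ∈ x.powerset, (-1 : ℂ) ^ m.card) = if x = ∅ then 1 else 0 := by
  have h := Finset.sum_powerset_neg_one_pow_card (x := x)
  have h2 : ((∑ m ∈ x.powerset, (-1 : ℤ) ^ m.card : ℤ) : ℂ)
      = ∑ m ∈ x.powerset, (-1 : ℂ) ^ m.card := by push_cast; rfl
  rw [← h2, h]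
  split <;> simp

lemma pconv_muP_sum (l : Multiset ℕ) :
    pconv muP (fun t => (t.sum : ℂ)) l =
      if l.toFinset.card = 1 then (smPart l : ℂ) else 0 := by
  have hsum : pconv muP (fun t => (t.sum : ℂ)) l =
      ∑ s ∈ l.toFinset.powerset, (-1 : ℂ) ^ s.card * ((l.sum : ℂ) - (s.1.sum : ℂ)) := by
    rw [pconv]
    rw [← Finset.sum_filter_of_ne (p := fun d => d.Nodup)
      (fun d _ hne => by by_contra h; simp [muP, h] at hne)]
    refine Finset.sum_bij' (fun d _ => d.toFinset) (fun s _ => s.1) ?_ ?_ ?_ ?_ ?_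
    · intro d hd
      simp only [Finset.mem_filter, Multiset.mem_toFinset, Multiset.mem_powerset] at hd
      rw [Finset.mem_powerset]
      intro a ha
      rw [Multiset.mem_toFinset] at ha ⊢
      exact Multiset.subset_of_le hd.1 ha
    · intro s hs
      rw [Finset.mem_powerset] at hs
      simp only [Finset.mem_filter, Multiset.mem_toFinset, Multiset.mem_powerset]
      refine ⟨(Multiset.le_iff_subset s.nodup).2 fun a ha => ?_, s.nodup⟩
      have := hs (Finset.mem_def.2 ha)
      rwa [Multiset.mem_toFinset] at this
    · intro d hd
      simp only [Finset.mem_filter, Multiset.mem_toFinset, Multiset.mem_powerset] at hd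
      have : d.toFinset.val = d := by
        rw [Multiset.toFinset_val]; exact Multiset.dedup_eq_self.2 hd.2
      exact this
    · intro s _
      exact Finset.val_toFinset s
    · intro d hd
      simp only [Finset.mem_filter, Multiset.mem_toFinset, Multiset.mem_powerset] at hd
      obtain ⟨hdl, hnd⟩ := hd
      have hval : d.toFinset.1 = d := by
        rw [Multiset.toFinset_val]; exact Multiset.dedup_eq_self.2 hnd
      have hcard : d.toFinset.card = Multiset.card d := by
        rw [Finset.card, hval]
      have hsub : (l - d).sum + d.sum = l.sum := by
        rw [← Multiset.sum_add, tsub_add_cancel_of_le hdl]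
      have hcast : ((l - d).sum : ℂ) = (l.sum : ℂ) - (d.sum : ℂ) := by
        have h2 : ((l - d).sum : ℂ) + (d.sum : ℂ) = (l.sum : ℂ) := by
          exact_mod_cast congrArg (Nat.cast : ℕ → ℂ) hsub
        linear_combination h2
      rw [muP, if_pos hnd, hcast, hcard, hval]
  rw [hsum]
  rcases eq_or_ne l.toFinset ∅ with h0 | h0
  · rw [Multiset.toFinset_eq_empty] at h0
    subst h0
    simp
  · obtain ⟨a, ha⟩ := Finset.nonempty_of_ne_empty h0
    have hae : a ∉ l.toFinset.erase a := Finset.notMem_erase a _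
    rw [← Finset.insert_erase ha, Finset.sum_powerset_insert hae, ← Finset.sum_add_distrib]
    have hterm : ∀ t ∈ (l.toFinset.erase a).powerset,
        ((-1 : ℂ) ^ t.card * ((l.sum : ℂ) - (t.1.sum : ℂ)) +
          (-1 : ℂ) ^ (insert a t).card * ((l.sum : ℂ) - ((insert a t).1.sum : ℂ)))
        = (-1 : ℂ) ^ t.card * (a : ℂ) := by
      intro t ht
      rw [Finset.mem_powerset] at ht
      have hat : a ∉ t := fun h => hae (ht h)
      rw [Finset.card_insert_of_notMem hat, Finset.insert_val_of_notMem hat,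
        Multiset.sum_cons]
      push_cast
      ring
    rw [Finset.sum_congr rfl hterm, ← Finset.sum_mul, neg_one_pow_powerset_sum,
      Finset.insert_erase ha]
    rcases eq_or_ne (l.toFinset.erase a) ∅ with he | he
    · have hfin : l.toFinset = {a} := by
        rw [← Finset.insert_erase ha, he]; rfl
      rw [if_pos he, hfin, one_mul, smPart_of_toFinset_eq hfin]
      simp
    · have hcard : l.toFinset.card ≠ 1 := by
        intro hc
        obtain ⟨b, hb⟩ := Finset.card_eq_one.1 hc
        have : a = b := by rw [hb] at ha; simpa using ha
        rw [hb, this] at he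
        simp at he
      rw [if_neg he, if_neg hcard, zero_mul]

lemma geom_inv (n : ℕ) (hn : 0 < n) :
    ((1 : PowerSeries ℂ) - X ^ n)⁻¹ =
      PowerSeries.mk fun m => if n ∣ m then (1 : ℂ) else 0 := by
  rw [PowerSeries.inv_eq_iff_mul_eq_one]
  · ext k
    rw [mul_sub, mul_one, map_sub, PowerSeries.coeff_mul_X_pow', PowerSeries.coeff_mk]
    rcases eq_or_ne k 0 with rfl | hk
    · rw [if_pos (dvd_zero n), if_neg (by omega)]
      simp
    · rw [PowerSeries.coeff_one, if_neg hk]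
      rcases le_or_gt n k with h | h
      · rw [if_pos h, PowerSeries.coeff_mk]
        have hdvd : n ∣ k ↔ n ∣ k - n := by
          constructor
          · intro hd; exact (Nat.dvd_sub hd dvd_rfl)
          · intro hd
            have : k = (k - n) + n := by omega
            rw [this]; exact Nat.dvd_add hd dvd_rfl
        by_cases hc : n ∣ k
        · rw [if_pos hc, if_pos (hdvd.1 hc)]; ring
        · rw [if_neg hc, if_neg (fun h2 => hc (hdvd.2 h2))]; ring
      · have : ¬ n ∣ k := fun hd => by
          have := Nat.le_of_dvd (by omega) hd; omega
        rw [if_neg this, if_neg (show ¬ n ≤ k by omega), sub_zero]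
  · simp [hn.ne']

lemma coeff_term (n m : ℕ) (h1 : 1 ≤ n) :
    PowerSeries.coeff m ((n : ℂ) • ((X : PowerSeries ℂ) ^ n * (1 - X ^ n)⁻¹)) =
      if n ∣ m ∧ n ≤ m then (n : ℂ) else 0 := by
  rw [map_smul, smul_eq_mul, geom_inv n h1]
  rw [mul_comm ((X : PowerSeries ℂ) ^ n), PowerSeries.coeff_mul_X_pow']
  rcases le_or_gt n m with h | h
  · rw [if_pos h, PowerSeries.coeff_mk]
    have hdvd : n ∣ m - n ↔ n ∣ m := by
      constructor
      · intro hd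
        have : m = (m - n) + n := by omega
        rw [this]; exact Nat.dvd_add hd dvd_rfl
      · intro hd; exact Nat.dvd_sub hd dvd_rfl
    by_cases hc : n ∣ m
    · rw [if_pos (hdvd.2 hc), if_pos ⟨hc, h⟩, mul_one]
    · rw [if_neg (fun h2 => hc (hdvd.1 h2)), if_neg (by tauto), mul_zero]
  · rw [if_neg (by omega), if_neg (by omega), mul_zero]

lemma smPart_replicate (k n : ℕ) (hk : k ≠ 0) :
    smPart (Multiset.replicate k n) = n := by
  apply smPart_of_toFinset_eq
  rw [Multiset.toFinset_replicate, if_neg hk]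

lemma sum_partition_s15 (m : ℕ) (P : Multiset ℕ → Prop) :
    (∑ p : Nat.Partition m,
        if P p.parts then pconv muP (fun t => (t.sum : ℂ)) p.parts else 0)
      = ∑ n ∈ m.divisors.filter (fun n => P (Multiset.replicate (m / n) n)), (n : ℂ) := by
  have hre : ∀ p : Nat.Partition m,
      (if P p.parts then pconv muP (fun t => (t.sum : ℂ)) p.parts else 0)
      = if p.parts.toFinset.card = 1 ∧ P p.parts then (smPart p.parts : ℂ) else 0 := by
    intro p
    rw [pconv_muP_sum]
    by_cases h1 : P p.parts <;> by_cases h2 : p.parts.toFinset.card = 1 <;>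
      simp [h1, h2]
  calc (∑ p : Nat.Partition m,
        if P p.parts then pconv muP (fun t => (t.sum : ℂ)) p.parts else 0)
      = ∑ p ∈ Finset.univ.filter
          (fun p : Nat.Partition m => p.parts.toFinset.card = 1 ∧ P p.parts),
          (smPart p.parts : ℂ) := by
        rw [Finset.sum_filter]
        exact Finset.sum_congr rfl fun p _ => hre p
    _ = ∑ n ∈ m.divisors.filter (fun n => P (Multiset.replicate (m / n) n)), (n : ℂ) := by
        have struct : ∀ p : Nat.Partition m, p.parts.toFinset.card = 1 →
            smPart p.parts ∈ m.divisors ∧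
            p.parts = Multiset.replicate (m / smPart p.parts) (smPart p.parts) := by
          intro p hp
          obtain ⟨a, ha⟩ := Finset.card_eq_one.1 hp
          have hsm : smPart p.parts = a := smPart_of_toFinset_eq ha
          have hamem : a ∈ p.parts := by
            rw [← Multiset.mem_toFinset, ha]; exact Finset.mem_singleton_self a
          have hapos : 0 < a := p.parts_pos hamem
          have hrep : p.parts = Multiset.replicate (Multiset.card p.parts) a :=
            Multiset.eq_replicate_card.2 fun b hb => by
              have := Multiset.mem_toFinset.2 hb
              rw [ha] at this
              simpa using this
          have hksum : Multiset.card p.parts * a = m := by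
            have := p.parts_sum
            rw [hrep] at this
            simpa [Multiset.sum_replicate, smul_eq_mul] using this
          have hkpos : 0 < Multiset.card p.parts := Multiset.card_pos.2 fun h => by
            rw [h] at hamem; simp at hamem
          have hmne : m ≠ 0 := by
            intro h
            have h0 : Multiset.card p.parts * a = 0 := by omega
            rcases Nat.mul_eq_zero.1 h0 with h' | h' <;> omega
          have hdvd : a ∣ m := ⟨Multiset.card p.parts, hksum.symm.trans (mul_comm _ _)⟩
          have hdiv : m / a = Multiset.card p.parts :=
            Nat.div_eq_of_eq_mul_left hapos hksum.symm
          refine ⟨?_, ?_⟩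
          · rw [hsm, Nat.mem_divisors]; exact ⟨hdvd, hmne⟩
          · rw [hsm, hdiv]; exact hrep
        refine Finset.sum_bij' (fun p _ => smPart p.parts)
          (fun n hn => ⟨Multiset.replicate (m / n) n, ?_, ?_⟩) ?_ ?_ ?_ ?_ ?_
        · intro i hi
          rw [Finset.mem_filter, Nat.mem_divisors] at hn
          have : i = n := Multiset.eq_of_mem_replicate hi
          subst this
          exact Nat.pos_of_mem_divisors (Nat.mem_divisors.2 hn.1)
        · rw [Multiset.sum_replicate, smul_eq_mul]
          rw [Finset.mem_filter, Nat.mem_divisors] at hn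
          exact Nat.div_mul_cancel hn.1.1
        · intro p hp
          rw [Finset.mem_filter] at hp
          obtain ⟨hc, hP⟩ := hp.2.imp id id
          obtain ⟨hd, hrep⟩ := struct p hp.2.1
          rw [Finset.mem_filter]
          exact ⟨hd, by rw [← hrep]; exact hp.2.2⟩
        · intro n hn
          rw [Finset.mem_filter]
          refine ⟨Finset.mem_univ _, ?_, ?_⟩
          · show (Multiset.replicate (m / n) n).toFinset.card = 1
            rw [Finset.mem_filter, Nat.mem_divisors] at hn
            have hnpos : 0 < n := Nat.pos_of_mem_divisors (Nat.mem_divisors.2 hn.1)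
            have hdpos : 0 < m / n :=
              Nat.div_pos (Nat.le_of_dvd (Nat.pos_of_ne_zero hn.1.2) hn.1.1) hnpos
            rw [Multiset.toFinset_replicate, if_neg hdpos.ne']
            rfl
          · show P (Multiset.replicate (m / n) n)
            rw [Finset.mem_filter] at hn
            exact hn.2
        · intro p hp
          rw [Finset.mem_filter] at hp
          obtain ⟨hd, hrep⟩ := struct p hp.2.1
          exact Nat.Partition.ext hrep.symm
        · intro n hn
          rw [Finset.mem_filter, Nat.mem_divisors] at hn
          have hnpos : 0 < n := Nat.pos_of_mem_divisors (Nat.mem_divisors.2 hn.1)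
          have hdpos : 0 < m / n :=
            Nat.div_pos (Nat.le_of_dvd (Nat.pos_of_ne_zero hn.1.2) hn.1.1) hnpos
          exact smPart_replicate _ _ hdpos.ne'
        · intro p hp
          rfl

/-- Size convolution identity: for the size function `sz(λ) = |λ|` and any
set `S` of positive integers, as formal power series,
`∑_{sm(λ)∈S} (μ_P * sz)(λ) q^{|λ|} = ∑_{n∈S} n q^n/(1-q^n)`;
in particular (taking all positive integers)
`∑_{λ≠∅} (μ_P * sz)(λ) q^{|λ|} = ∑_{n≥1} σ₁(n) q^n`. -/
theorem size_convolution_identity (S : Set ℕ) (hS : 0 ∉ S) :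
    (psOn (fun l => smPart l ∈ S) (pconv muP (fun l => (l.sum : ℂ))) =
      PowerSeries.mk fun m => ∑ n ∈ Finset.Icc 1 m,
        if n ∈ S then
          PowerSeries.coeff m
            ((n : ℂ) • (PowerSeries.X ^ n * (1 - PowerSeries.X ^ n)⁻¹))
        else 0) ∧
    (psOn (fun l => l ≠ 0) (pconv muP (fun l => (l.sum : ℂ))) =
      PowerSeries.mk fun m => ∑ d ∈ m.divisors, (d : ℂ)) := by
  have hdivpos : ∀ {m n : ℕ}, n ∈ m.divisors → 0 < m / n := by
    intro m n hn
    rw [Nat.mem_divisors] at hn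
    exact Nat.div_pos (Nat.le_of_dvd (Nat.pos_of_ne_zero hn.2) hn.1)
      (Nat.pos_of_mem_divisors (Nat.mem_divisors.2 hn))
  constructor
  · ext m
    rw [psOn, PowerSeries.coeff_mk, PowerSeries.coeff_mk,
      sum_partition_s15 m (fun l => smPart l ∈ S)]
    have hR : ∀ n ∈ Finset.Icc 1 m,
        (if n ∈ S then PowerSeries.coeff m
          ((n : ℂ) • ((X : PowerSeries ℂ) ^ n * (1 - X ^ n)⁻¹)) else 0)
        = if n ∈ S ∧ n ∣ m then (n : ℂ) else 0 := by
      intro n hn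
      rw [Finset.mem_Icc] at hn
      by_cases hns : n ∈ S
      · rw [if_pos hns, coeff_term n m hn.1]
        by_cases hd : n ∣ m
        · rw [if_pos ⟨hd, hn.2⟩, if_pos ⟨hns, hd⟩]
        · rw [if_neg (by tauto), if_neg (by tauto)]
      · rw [if_neg hns, if_neg (by tauto)]
    rw [Finset.sum_congr rfl hR, ← Finset.sum_filter]
    congr 1
    have h1 : m.divisors.filter (fun n => smPart (Multiset.replicate (m / n) n) ∈ S)
        = m.divisors.filter (fun n => n ∈ S) := by
      apply Finset.filter_congr
      intro n hn
      rw [smPart_replicate _ _ (hdivpos hn).ne']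
    rw [h1]
    ext n
    simp only [Finset.mem_filter, Nat.mem_divisors, Finset.mem_Icc]
    constructor
    · rintro ⟨⟨hd, hm⟩, hs⟩
      have hn0 : n ≠ 0 := fun h => hS (h ▸ hs)
      exact ⟨⟨Nat.pos_of_ne_zero hn0, Nat.le_of_dvd (Nat.pos_of_ne_zero hm) hd⟩, hs, hd⟩
    · rintro ⟨⟨h1, h2⟩, hs, hd⟩
      exact ⟨⟨hd, by omega⟩, hs⟩
  · ext m
    rw [psOn, PowerSeries.coeff_mk, PowerSeries.coeff_mk,
      sum_partition_s15 m (fun l => l ≠ 0)]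
    congr 1
    ext n
    simp only [Finset.mem_filter]
    constructor
    · exact fun h => h.1
    · intro hn
      refine ⟨hn, fun h => ?_⟩
      have := hdivpos hn
      rw [Multiset.eq_zero_iff_forall_notMem] at h
      exact h n (Multiset.mem_replicate.2 ⟨this.ne', rfl⟩)
end

section
/- If S ⊆ ℕ satisfies lim_{q→1⁻} (1-q) ∑_{n∈S} q^n = d for some real d, then lim_{q→1⁻} (∑_{n∈S} q^n/(1-q^n)) / (∑_{n≥1} q^n/(1-q^n)) = d, where q → 1⁻ along the real axis. -/
open Filter Set Finset

private lemma lqd_one_sub_pow_le {q : ℝ} (hq0 : 0 ≤ q) (hq1 : q ≤ 1) (k : ℕ) :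
    1 - q ^ k ≤ k * (1 - q) := by
  have hg : (∑ i ∈ Finset.range k, q ^ i) * (1 - q) = 1 - q ^ k := by
    linear_combination -(geom_sum_mul q k)
  have hs : (∑ i ∈ Finset.range k, q ^ i) ≤ k := by
    calc (∑ i ∈ Finset.range k, q ^ i) ≤ ∑ i ∈ Finset.range k, (1:ℝ) :=
          Finset.sum_le_sum fun i _ => pow_le_one₀ hq0 hq1
      _ = k := by simp
  nlinarith [hs, hg, sub_nonneg.2 hq1]

private lemma lqd_tsum_succ_geom {x : ℝ} (hx0 : 0 ≤ x) (hx1 : x < 1) :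
    ∑' m : ℕ, x ^ (m + 1) = x / (1 - x) := by
  simp only [pow_succ', tsum_mul_left, tsum_geometric_of_lt_one hx0 hx1]
  rw [div_eq_mul_inv]

private lemma lqd_summable_succ_geom {x : ℝ} (hx0 : 0 ≤ x) (hx1 : x < 1) :
    Summable fun m : ℕ => x ^ (m + 1) := by
  simp only [pow_succ']
  exact (summable_geometric_of_lt_one hx0 hx1).mul_left x

private lemma lqd_fS_summable (S : Set ℕ) {x : ℝ} (hx0 : 0 ≤ x) (hx1 : x < 1) :
    Summable fun n : S => x ^ (n : ℕ) :=
  (summable_geometric_of_lt_one hx0 hx1).subtype S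

private lemma lqd_fS_nonneg (S : Set ℕ) {x : ℝ} (hx0 : 0 ≤ x) :
    0 ≤ ∑' n : S, x ^ (n : ℕ) :=
  tsum_nonneg fun n => pow_nonneg hx0 _

private lemma lqd_fS_le (S : Set ℕ) (hpos : ∀ n ∈ S, 0 < n) {x : ℝ}
    (hx0 : 0 ≤ x) (hx1 : x < 1) :
    (∑' n : S, x ^ (n : ℕ)) ≤ x / (1 - x) := by
  have hinj : Function.Injective (fun n : S => (n : ℕ) - 1) := by
    rintro ⟨a, ha⟩ ⟨b, hb⟩ hab
    have ha' := hpos a ha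
    have hb' := hpos b hb
    simp only [Subtype.mk.injEq] at hab ⊢
    omega
  have hle : (∑' n : S, x ^ (n : ℕ)) ≤ ∑' k : ℕ, x ^ (k + 1) := by
    refine Summable.tsum_le_tsum_of_inj _ hinj (fun c _ => pow_nonneg hx0 _)
      (fun n => ?_) (lqd_fS_summable S hx0 hx1) (lqd_summable_succ_geom hx0 hx1)
    have : ((n : ℕ) - 1) + 1 = (n : ℕ) := Nat.succ_pred_eq_of_pos (hpos n n.2)
    simp only [this]
    exact le_refl _
  rw [lqd_tsum_succ_geom hx0 hx1] at hle
  exact hle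

private lemma lqd_one_sub_pow_pos {q : ℝ} (hq0 : 0 ≤ q) (hq1 : q < 1) {n : ℕ}
    (hn : 0 < n) : 0 < 1 - q ^ n ∧ 1 - q ≤ 1 - q ^ n := by
  have h1 : q ^ n ≤ q ^ 1 := pow_le_pow_of_le_one hq0 hq1.le hn
  have h2 : q ^ n < 1 := pow_lt_one₀ hq0 hq1 hn.ne'
  constructor
  · linarith
  · simp only [pow_one] at h1; linarith

/-- Summability of the Lambert series over `S`. -/
private lemma lqd_summable_lambert_S (S : Set ℕ) (hpos : ∀ n ∈ S, 0 < n) {q : ℝ}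
    (hq0 : 0 ≤ q) (hq1 : q < 1) :
    Summable fun n : S => q ^ (n : ℕ) / (1 - q ^ (n : ℕ)) := by
  refine Summable.of_nonneg_of_le (fun n => ?_) (fun n => ?_)
    (((summable_geometric_of_lt_one hq0 hq1).mul_right (1 - q)⁻¹).subtype S)
  · obtain ⟨h2, -⟩ := lqd_one_sub_pow_pos hq0 hq1 (hpos n n.2)
    positivity
  · obtain ⟨h2, h3⟩ := lqd_one_sub_pow_pos hq0 hq1 (hpos n n.2)
    rw [div_eq_mul_inv]
    refine mul_le_mul_of_nonneg_left ?_ (pow_nonneg hq0 _)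
    exact inv_anti₀ (by linarith) h3

private lemma lqd_summable_b {q : ℝ} (hq0 : 0 ≤ q) (hq1 : q < 1) :
    Summable fun m : ℕ => q ^ (m + 1) / (1 - q ^ (m + 1)) := by
  refine Summable.of_nonneg_of_le (fun m => ?_) (fun m => ?_)
    ((lqd_summable_succ_geom hq0 hq1).mul_right (1 - q)⁻¹)
  · obtain ⟨h2, -⟩ := lqd_one_sub_pow_pos hq0 hq1 (Nat.succ_pos m)
    positivity
  · obtain ⟨h2, h3⟩ := lqd_one_sub_pow_pos hq0 hq1 (Nat.succ_pos m)
    rw [div_eq_mul_inv]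
    refine mul_le_mul_of_nonneg_left ?_ (pow_nonneg hq0 _)
    exact inv_anti₀ (by linarith) h3

/-- Fubini: the Lambert series over `S` equals `∑_m f_S(q^{m+1})`. -/
private lemma lqd_fubini (S : Set ℕ) (hpos : ∀ n ∈ S, 0 < n) {q : ℝ}
    (hq0 : 0 ≤ q) (hq1 : q < 1) :
    (∑' n : S, q ^ (n : ℕ) / (1 - q ^ (n : ℕ)))
      = ∑' m : ℕ, ∑' n : S, (q ^ (m + 1)) ^ (n : ℕ) := by
  set f : S → ℕ → ℝ := fun n m => q ^ ((n : ℕ) * (m + 1)) with hf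
  have hqn : ∀ n : S, 0 ≤ q ^ (n : ℕ) ∧ q ^ (n : ℕ) < 1 := fun n =>
    ⟨pow_nonneg hq0 _, pow_lt_one₀ hq0 hq1 (hpos n n.2).ne'⟩
  have hfib : ∀ n : S, ∑' m : ℕ, f n m = q ^ (n : ℕ) / (1 - q ^ (n : ℕ)) := by
    intro n
    have : ∀ m : ℕ, f n m = (q ^ (n : ℕ)) ^ (m + 1) := by
      intro m; rw [hf]; simp only [← pow_mul]
    rw [tsum_congr this, lqd_tsum_succ_geom (hqn n).1 (hqn n).2]
  have hfibsum : ∀ n : S, Summable (f n) := by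
    intro n
    have : ∀ m : ℕ, f n m = (q ^ (n : ℕ)) ^ (m + 1) := by
      intro m; rw [hf]; simp only [← pow_mul]
    rw [show f n = fun m => (q ^ (n : ℕ)) ^ (m + 1) from funext this]
    exact lqd_summable_succ_geom (hqn n).1 (hqn n).2
  have huncurry : Summable (Function.uncurry f) := by
    refine (summable_prod_of_nonneg (f := Function.uncurry f)
      (fun p => pow_nonneg hq0 _)).2 ⟨?_, ?_⟩
    · intro n
      simpa only [Function.uncurry_apply_pair] using hfibsum n
    · simp only [Function.uncurry_apply_pair]
      have : (fun n : S => ∑' m : ℕ, f n m)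
          = fun n : S => q ^ (n : ℕ) / (1 - q ^ (n : ℕ)) := funext hfib
      rw [this]
      exact lqd_summable_lambert_S S hpos hq0 hq1
  have hcsum : ∀ m : ℕ, Summable fun n : S => f n m := by
    intro m
    have : ∀ n : S, f n m = (q ^ (m + 1)) ^ (n : ℕ) := by
      intro n; rw [hf]; simp only [← pow_mul, mul_comm]
    rw [show (fun n : S => f n m) = fun n : S => (q ^ (m + 1)) ^ (n : ℕ) from funext this]
    exact lqd_fS_summable S (pow_nonneg hq0 _)
      (pow_lt_one₀ hq0 hq1 (Nat.succ_ne_zero m))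
  calc (∑' n : S, q ^ (n : ℕ) / (1 - q ^ (n : ℕ)))
      = ∑' (n : S) (m : ℕ), f n m := by rw [tsum_congr fun n => (hfib n).symm]
    _ = ∑' (m : ℕ) (n : S), f n m := (Summable.tsum_comm' huncurry hfibsum hcsum).symm
    _ = ∑' (m : ℕ) (n : S), (q ^ (m + 1)) ^ (n : ℕ) := by
        refine tsum_congr fun m => tsum_congr fun n => ?_
        rw [hf]; simp only [← pow_mul, mul_comm]

/-- The pointwise estimate. -/
private lemma lqd_pointwise (S : Set ℕ) (hpos : ∀ n ∈ S, 0 < n) (d ε δ : ℝ)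
    (hε : 0 < ε) (hδ : 0 < δ) (hδ2 : δ ≤ 1/2)
    (hsmall : ∀ x : ℝ, 0 ≤ x → x < 1 → 1 - δ < x →
      |(1 - x) * (∑' n : S, x ^ (n : ℕ)) - d * x| ≤ ε)
    {x : ℝ} (hx0 : 0 ≤ x) (hx1 : x < 1) :
    |(∑' n : S, x ^ (n : ℕ)) - d * (x / (1 - x))|
      ≤ 2 * ε * (x / (1 - x)) + ((|d| + 1) / δ) * x := by
  set F := ∑' n : S, x ^ (n : ℕ) with hF
  have h1x : 0 < 1 - x := by linarith
  have hFpos : 0 ≤ F := lqd_fS_nonneg S hx0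
  have hFle : F ≤ x / (1 - x) := lqd_fS_le S hpos hx0 hx1
  have hFle' : (1 - x) * F ≤ x := by
    rw [le_div_iff₀ h1x] at hFle; linarith [hFle]
  have key : F - d * (x / (1 - x)) = ((1 - x) * F - d * x) / (1 - x) := by
    field_simp
  rw [key, abs_div, abs_of_pos h1x]
  have hxd : 0 ≤ x / (1 - x) := div_nonneg hx0 h1x.le
  by_cases hcase : 1 - δ < x
  · -- x close to 1
    have hnum : |(1 - x) * F - d * x| ≤ ε := hsmall x hx0 hx1 hcase
    have hxhalf : (1:ℝ)/2 ≤ x := by linarith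
    have h2x : ε ≤ 2 * ε * x := by nlinarith
    calc |(1 - x) * F - d * x| / (1 - x) ≤ 2 * ε * x / (1 - x) := by
          gcongr
          exact hnum.trans h2x
      _ = 2 * ε * (x / (1 - x)) := by ring
      _ ≤ 2 * ε * (x / (1 - x)) + ((|d| + 1) / δ) * x :=
          le_add_of_nonneg_right (by positivity)
  · -- x away from 1
    push_neg at hcase
    have hδx : δ ≤ 1 - x := by linarith
    have hnum : |(1 - x) * F - d * x| ≤ (|d| + 1) * x := by
      have h1 : |(1 - x) * F - d * x| ≤ |(1 - x) * F| + |d * x| := abs_sub _ _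
      have h2 : |(1 - x) * F| = (1 - x) * F := abs_of_nonneg (by positivity)
      have h3 : |d * x| = |d| * x := by rw [abs_mul, abs_of_nonneg hx0]
      nlinarith [h1]
    calc |(1 - x) * F - d * x| / (1 - x) ≤ ((|d| + 1) * x) / δ := by
          apply div_le_div₀ (by positivity) hnum hδ hδx
      _ = ((|d| + 1) / δ) * x := by ring
      _ ≤ 2 * ε * (x / (1 - x)) + ((|d| + 1) / δ) * x :=
          le_add_of_nonneg_left (by positivity)

/-- Divergence of `(1-q) * B(q)`. -/
private lemma lqd_div : Tendsto
    (fun q : ℝ => (1 - q) * ∑' m : ℕ, q ^ (m + 1) / (1 - q ^ (m + 1)))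
    (nhdsWithin 1 (Set.Ico (0 : ℝ) 1)) atTop := by
  rw [tendsto_atTop]
  intro C
  obtain ⟨N, hN⟩ := (Real.tendsto_sum_range_one_div_nat_succ_atTop.eventually_ge_atTop
    (C + 1)).exists
  have htend : Tendsto (fun q : ℝ => q ^ N * (∑ i ∈ Finset.range N, 1 / ((i : ℝ) + 1)))
      (nhdsWithin 1 (Set.Ico (0 : ℝ) 1))
      (nhds (∑ i ∈ Finset.range N, 1 / ((i : ℝ) + 1))) := by
    have : Tendsto (fun q : ℝ => q ^ N * (∑ i ∈ Finset.range N, 1 / ((i : ℝ) + 1)))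
        (nhds 1) (nhds (1 ^ N * (∑ i ∈ Finset.range N, 1 / ((i : ℝ) + 1)))) :=
      ((continuous_pow N).mul continuous_const).tendsto 1
    simpa using this.mono_left nhdsWithin_le_nhds
  have hev : ∀ᶠ q in nhdsWithin 1 (Set.Ico (0 : ℝ) 1),
      C < q ^ N * (∑ i ∈ Finset.range N, 1 / ((i : ℝ) + 1)) :=
    htend.eventually (eventually_gt_nhds (by linarith))
  filter_upwards [hev, self_mem_nhdsWithin] with q hq hq01
  obtain ⟨hq0, hq1⟩ := hq01
  have hb := lqd_summable_b hq0 hq1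
  have hsum : ∑ m ∈ Finset.range N, q ^ (m + 1) / (1 - q ^ (m + 1))
      ≤ ∑' m : ℕ, q ^ (m + 1) / (1 - q ^ (m + 1)) := by
    refine Summable.sum_le_tsum _ (fun m _ => ?_) hb
    obtain ⟨h2, -⟩ := lqd_one_sub_pow_pos hq0 hq1 (Nat.succ_pos m)
    positivity
  have hterm : ∀ m ∈ Finset.range N,
      q ^ N * (1 / ((m : ℝ) + 1)) ≤ (1 - q) * (q ^ (m + 1) / (1 - q ^ (m + 1))) := by
    intro m hm
    have hmN : m + 1 ≤ N := Finset.mem_range.1 hm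
    obtain ⟨h2, -⟩ := lqd_one_sub_pow_pos hq0 hq1 (Nat.succ_pos m)
    have hqN : q ^ N ≤ q ^ (m + 1) := pow_le_pow_of_le_one hq0 hq1.le hmN
    have hgeom : 1 - q ^ (m + 1) ≤ ((m : ℝ) + 1) * (1 - q) := by
      have := lqd_one_sub_pow_le hq0 hq1.le (m + 1)
      push_cast at this
      linarith
    rw [mul_one_div, ← mul_div_assoc, div_le_div_iff₀ (by positivity) h2]
    have hq0N : 0 ≤ q ^ N := pow_nonneg hq0 _
    have hstep1 : q ^ N * (1 - q ^ (m + 1)) ≤ q ^ N * (((m : ℝ) + 1) * (1 - q)) :=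
      mul_le_mul_of_nonneg_left hgeom hq0N
    have hstep2 : q ^ N * (((m : ℝ) + 1) * (1 - q)) ≤ q ^ (m + 1) * (((m : ℝ) + 1) * (1 - q)) :=
      mul_le_mul_of_nonneg_right hqN (mul_nonneg (by positivity) (by linarith))
    calc q ^ N * (1 - q ^ (m + 1)) ≤ q ^ (m + 1) * (((m : ℝ) + 1) * (1 - q)) :=
          hstep1.trans hstep2
      _ = (1 - q) * q ^ (m + 1) * ((m : ℝ) + 1) := by ring
  calc C ≤ q ^ N * (∑ i ∈ Finset.range N, 1 / ((i : ℝ) + 1)) := hq.le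
    _ = ∑ m ∈ Finset.range N, q ^ N * (1 / ((m : ℝ) + 1)) := by rw [Finset.mul_sum]
    _ ≤ ∑ m ∈ Finset.range N, (1 - q) * (q ^ (m + 1) / (1 - q ^ (m + 1))) :=
        Finset.sum_le_sum hterm
    _ = (1 - q) * ∑ m ∈ Finset.range N, q ^ (m + 1) / (1 - q ^ (m + 1)) := by
        rw [Finset.mul_sum]
    _ ≤ (1 - q) * ∑' m : ℕ, q ^ (m + 1) / (1 - q ^ (m + 1)) :=
        mul_le_mul_of_nonneg_left hsum (by linarith)

set_option maxHeartbeats 2000000 in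
/-- If `S` (a set of positive integers) satisfies
`lim_{q→1⁻} (1-q) ∑_{n∈S} q^n = d`, then
`lim_{q→1⁻} (∑_{n∈S} q^n/(1-q^n)) / (∑_{n≥1} q^n/(1-q^n)) = d`. -/
theorem lambert_quotient_density (S : Set ℕ) (hpos : ∀ n ∈ S, 0 < n) (d : ℝ)
    (h : Filter.Tendsto (fun q : ℝ => (1 - q) * ∑' n : S, q ^ (n : ℕ))
      (nhdsWithin 1 (Set.Ico (0 : ℝ) 1)) (nhds d)) :
    Filter.Tendsto
      (fun q : ℝ =>
        (∑' n : S, q ^ (n : ℕ) / (1 - q ^ (n : ℕ))) /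
          ∑' n : ℕ, q ^ (n + 1) / (1 - q ^ (n + 1)))
      (nhdsWithin 1 (Set.Ico (0 : ℝ) 1)) (nhds d) := by
  rw [Metric.tendsto_nhds]
  intro ε hε
  set ε₀ : ℝ := ε / 4 with hε₀def
  have hε₀ : 0 < ε₀ := by positivity
  -- get δ from the hypothesis
  obtain ⟨δ₁, hδ₁, hδ₁prop⟩ := (Metric.tendsto_nhdsWithin_nhds.1 h) (ε₀ / 2) (by positivity)
  set δ : ℝ := min δ₁ (min (1/2) (ε₀ / (2 * (|d| + 1)))) with hδdef
  have hδpos : 0 < δ := by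
    apply lt_min hδ₁
    apply lt_min (by norm_num)
    positivity
  have hδhalf : δ ≤ 1/2 := le_trans (min_le_right _ _) (min_le_left _ _)
  have hδd : δ ≤ ε₀ / (2 * (|d| + 1)) := le_trans (min_le_right _ _) (min_le_right _ _)
  have hsmall : ∀ x : ℝ, 0 ≤ x → x < 1 → 1 - δ < x →
      |(1 - x) * (∑' n : S, x ^ (n : ℕ)) - d * x| ≤ ε₀ := by
    intro x hx0 hx1 hxδ
    have hδle : δ ≤ δ₁ := min_le_left _ _
    have hdist : dist x 1 < δ₁ := by
      rw [Real.dist_eq, abs_of_nonpos (by linarith)]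
      linarith
    have h1 := hδ₁prop ⟨hx0, hx1⟩ hdist
    rw [Real.dist_eq] at h1
    have h2 : |d - d * x| ≤ ε₀ / 2 := by
      have : |d - d * x| = |d| * (1 - x) := by
        rw [show d - d * x = d * (1 - x) by ring, abs_mul, abs_of_nonneg (show (0:ℝ) ≤ 1 - x by linarith)]
      rw [this]
      have hx1δ : 1 - x ≤ δ := by linarith
      calc |d| * (1 - x) ≤ (|d| + 1) * δ := by
            nlinarith [abs_nonneg d, hx1δ, sub_nonneg.2 hx1.le]
        _ ≤ (|d| + 1) * (ε₀ / (2 * (|d| + 1))) := by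
            apply mul_le_mul_of_nonneg_left hδd (by positivity)
        _ = ε₀ / 2 := by field_simp
    calc |(1 - x) * (∑' n : S, x ^ (n : ℕ)) - d * x|
        ≤ |(1 - x) * (∑' n : S, x ^ (n : ℕ)) - d| + |d - d * x| := abs_sub_le _ _ _
      _ ≤ ε₀ / 2 + ε₀ / 2 := add_le_add h1.le h2
      _ = ε₀ := by ring
  set M : ℝ := |d| + 1 with hMdef
  have hMpos : 0 < M := by positivity
  set K : ℝ := M / δ with hKdef
  have hKpos : 0 < K := by positivity
  have hevdiv := lqd_div.eventually_ge_atTop (K / ε₀)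
  have hevhalf : ∀ᶠ q in nhdsWithin (1:ℝ) (Set.Ico (0:ℝ) 1), (1:ℝ)/2 < q :=
    (eventually_gt_nhds (by norm_num : (1:ℝ)/2 < 1)).filter_mono nhdsWithin_le_nhds
  filter_upwards [hevdiv, hevhalf, self_mem_nhdsWithin] with q hdiv hhalf hq01
  obtain ⟨hq0, hq1⟩ := hq01
  set b : ℕ → ℝ := fun m => q ^ (m + 1) / (1 - q ^ (m + 1)) with hbdef
  set B : ℝ := ∑' m : ℕ, b m with hBdef
  have hbsum : Summable b := lqd_summable_b hq0 hq1
  have hbnonneg : ∀ m, 0 ≤ b m := by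
    intro m
    obtain ⟨h2, -⟩ := lqd_one_sub_pow_pos hq0 hq1 (Nat.succ_pos m)
    rw [hbdef]; positivity
  have hBpos : 0 < B := by
    have h0 : 0 < b 0 := by
      have hb0 : b 0 = q / (1 - q) := by rw [hbdef]; norm_num
      rw [hb0]
      exact div_pos (by linarith) (by linarith)
    have := Summable.le_tsum hbsum 0 (fun j _ => hbnonneg j)
    rw [← hBdef] at this
    linarith
  -- the powers q^(m+1)
  have hqm0 : ∀ m : ℕ, (0:ℝ) ≤ q ^ (m + 1) := fun m => pow_nonneg hq0 _
  have hqm1 : ∀ m : ℕ, q ^ (m + 1) < 1 := fun m => pow_lt_one₀ hq0 hq1 (Nat.succ_ne_zero m)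
  -- A = ∑_m fS(q^(m+1))
  have hA : (∑' n : S, q ^ (n : ℕ) / (1 - q ^ (n : ℕ)))
      = ∑' m : ℕ, ∑' n : S, (q ^ (m + 1)) ^ (n : ℕ) := lqd_fubini S hpos hq0 hq1
  set g : ℕ → ℝ := fun m => ∑' n : S, (q ^ (m + 1)) ^ (n : ℕ) with hgdef
  have hgnonneg : ∀ m, 0 ≤ g m := fun m => lqd_fS_nonneg S (hqm0 m)
  have hgle : ∀ m, g m ≤ b m := by
    intro m
    have := lqd_fS_le S hpos (hqm0 m) (hqm1 m)
    rw [hgdef, hbdef]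
    exact this
  have hgsum : Summable g := Summable.of_nonneg_of_le hgnonneg hgle hbsum
  -- termwise bound
  have hptwise : ∀ m : ℕ, |g m - d * b m| ≤ 2 * ε₀ * b m + K * q ^ (m + 1) := by
    intro m
    have := lqd_pointwise S hpos d ε₀ δ hε₀ hδpos hδhalf hsmall (hqm0 m) (hqm1 m)
    rw [hgdef, hbdef, hKdef, hMdef]
    exact this
  set u : ℕ → ℝ := fun m => g m - d * b m with hudef
  have husum : Summable u := hgsum.sub (hbsum.mul_left d)
  have hrhs_sum : Summable (fun m : ℕ => 2 * ε₀ * b m + K * q ^ (m + 1)) :=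
    (hbsum.mul_left (2 * ε₀)).add ((lqd_summable_succ_geom hq0 hq1).mul_left K)
  have huabs : Summable (fun m => |u m|) := by
    refine Summable.of_nonneg_of_le (fun m => abs_nonneg _) (fun m => hptwise m) hrhs_sum
  have hAB : (∑' n : S, q ^ (n : ℕ) / (1 - q ^ (n : ℕ))) - d * B = ∑' m : ℕ, u m := by
    rw [hA, hBdef, ← tsum_mul_left, hudef, Summable.tsum_sub hgsum (hbsum.mul_left d)]
  have habs : |(∑' n : S, q ^ (n : ℕ) / (1 - q ^ (n : ℕ))) - d * B|
      ≤ 2 * ε₀ * B + K * (q / (1 - q)) := by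
    rw [hAB]
    calc |∑' m : ℕ, u m| ≤ ∑' m : ℕ, |u m| := by
          simpa [Real.norm_eq_abs] using norm_tsum_le_tsum_norm (f := u) (by simpa [Real.norm_eq_abs] using huabs)
      _ ≤ ∑' m : ℕ, (2 * ε₀ * b m + K * q ^ (m + 1)) := Summable.tsum_le_tsum hptwise huabs hrhs_sum
      _ = 2 * ε₀ * B + K * (q / (1 - q)) := by
          rw [Summable.tsum_add (hbsum.mul_left (2 * ε₀))
            ((lqd_summable_succ_geom hq0 hq1).mul_left K), tsum_mul_left, tsum_mul_left,
            lqd_tsum_succ_geom hq0 hq1, hBdef]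
  -- the second error term
  have h1q : 0 < 1 - q := by linarith
  have hsecond : K * (q / (1 - q)) / B ≤ ε₀ := by
    have hprod : K / ε₀ ≤ (1 - q) * B := hdiv
    have hK1 : K ≤ (1 - q) * B * ε₀ := (div_le_iff₀ hε₀).1 hprod
    have hKq : K * q ≤ ε₀ * ((1 - q) * B) := by nlinarith [hKpos.le, hq1.le, hhalf]
    have heq : K * (q / (1 - q)) / B = K * q / ((1 - q) * B) := by
      field_simp
    rw [heq, div_le_iff₀ (by positivity : (0:ℝ) < (1 - q) * B)]
    linarith
  -- combine
  have hfinal : dist ((∑' n : S, q ^ (n : ℕ) / (1 - q ^ (n : ℕ))) / B) d ≤ 3 * ε₀ := by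
    rw [Real.dist_eq]
    have hquot : (∑' n : S, q ^ (n : ℕ) / (1 - q ^ (n : ℕ))) / B - d
        = ((∑' n : S, q ^ (n : ℕ) / (1 - q ^ (n : ℕ))) - d * B) / B := by
      field_simp
    rw [hquot, abs_div, abs_of_pos hBpos]
    calc |(∑' n : S, q ^ (n : ℕ) / (1 - q ^ (n : ℕ))) - d * B| / B
        ≤ (2 * ε₀ * B + K * (q / (1 - q))) / B := by gcongr
      _ = 2 * ε₀ + K * (q / (1 - q)) / B := by field_simp
      _ ≤ 2 * ε₀ + ε₀ := by linarith [hsecond]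
      _ = 3 * ε₀ := by ring
  calc dist ((∑' n : S, q ^ (n : ℕ) / (1 - q ^ (n : ℕ))) / B) d ≤ 3 * ε₀ := hfinal
    _ < ε := by rw [hε₀def]; linarith
end
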